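/- arXiv:1503.04979 — 7 statements merged into one kernel-verified Lean document; each statement's English description precedes it below -/
import Mathlib

section
/- For all s, t ≥ 0 with s + t ≤ T and all x ∈ D, one has φ_{t+s}(u) + ψ_{t+s}(u)·x = φ_t(u) + φ_s(ψ_t(u)) + ψ_s(ψ_t(u))·x; consequently, since D has nonempty interior, the semiflow equations hold: φ_{t+s}(u) = φ_t(u) + φ_s(ψ_t(u)) and ψ_{t+s}(u) = ψ_s(ψ_t(u)). -/
/-!
By Chapman–Kolmogorov, `κ (t + s) = κ t ∘ₖ κ s`, so integrating `exp (u ⬝ᵥ ·)` first against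
`κ t y` turns it into `exp (φ t u + ψ t u ⬝ᵥ y)`, whose integral against `κ s x` is again of
exponentially affine form. Comparing exponents gives the pointwise identity, and an affine
function on `D` is determined by its values at `0` and at the standard basis vectors.
-/

open MeasureTheory Real Matrix ProbabilityTheory

/-- The canonical state space `D = ℝ_{≥0}^m × ℝ^n ⊆ ℝ^{m+n}`. -/
def canonicalStateSpace (m n : ℕ) : Set (Fin (m + n) → ℝ) :=
  {x | ∀ i : Fin (m + n), (i : ℕ) < m → 0 ≤ x i}

theorem MeasureTheory.lintegral_ofReal_exp_eq_of_integral_eq {α : Type*} [MeasurableSpace α]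
    {μ : Measure α} {f : α → ℝ} {c : ℝ} (h : ∫ y, exp (f y) ∂μ = exp c) :
    ∫⁻ y, ENNReal.ofReal (exp (f y)) ∂μ = ENNReal.ofReal (exp c) := by
  rw [← ofReal_integral_eq_lintegral_ofReal (Integrable.of_integral_ne_zero (h ▸ (exp_pos c).ne'))
    (Filter.Eventually.of_forall fun _ => (exp_pos _).le), h]

namespace ProbabilityTheory.Kernel

variable {α β γ : Type*} {mα : MeasurableSpace α} {mβ : MeasurableSpace β}
  {mγ : MeasurableSpace γ}

theorem eq_comp_of_apply_eq_lintegral {ξ : Kernel α γ} {η : Kernel β γ} {κ : Kernel α β}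
    (h : ∀ x A, MeasurableSet A → ξ x A = ∫⁻ y, η y A ∂κ x) : ξ = η ∘ₖ κ :=
  ext_iff'.2 fun x _ hA => (h x _ hA).trans (comp_apply' η κ x hA).symm

theorem integral_exp_comp (η : Kernel β γ) (κ : Kernel α β) {f : γ → ℝ} {g : β → ℝ}
    (hf : Measurable f) (hg : Measurable g) {a b : ℝ} {x : α}
    (hη : ∀ y, ∫ z, exp (f z) ∂η y = exp (a + g y)) (hκ : ∫ y, exp (g y) ∂κ x = exp b) :
    ∫ z, exp (f z) ∂(η ∘ₖ κ) x = exp (a + b) := by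
  have hlin : ∫⁻ z, ENNReal.ofReal (exp (f z)) ∂(η ∘ₖ κ) x = ENNReal.ofReal (exp (a + b)) := by
    calc ∫⁻ z, ENNReal.ofReal (exp (f z)) ∂(η ∘ₖ κ) x
        = ∫⁻ y, ENNReal.ofReal (exp a) * ENNReal.ofReal (exp (g y)) ∂κ x := by
          rw [lintegral_comp _ _ _ (by fun_prop)]
          refine lintegral_congr fun y => ?_
          rw [lintegral_ofReal_exp_eq_of_integral_eq (hη y), exp_add,
            ENNReal.ofReal_mul (exp_pos _).le]
      _ = ENNReal.ofReal (exp (a + b)) := by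
          rw [lintegral_const_mul _ (by fun_prop), lintegral_ofReal_exp_eq_of_integral_eq hκ,
            exp_add, ENNReal.ofReal_mul (exp_pos _).le]
  rw [integral_eq_lintegral_of_nonneg_ae (Filter.Eventually.of_forall fun _ => (exp_pos _).le)
    (by fun_prop), hlin, ENNReal.toReal_ofReal (exp_pos _).le]

end ProbabilityTheory.Kernel

theorem zero_mem_canonicalStateSpace (m n : ℕ) :
    (0 : Fin (m + n) → ℝ) ∈ canonicalStateSpace m n :=
  fun _ _ => le_rfl

theorem single_one_mem_canonicalStateSpace {m n : ℕ} (i : Fin (m + n)) :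
    (Pi.single i 1 : Fin (m + n) → ℝ) ∈ canonicalStateSpace m n := by
  intro j _
  rcases eq_or_ne j i with rfl | hj
  · simp
  · simp [hj]

theorem affine_eq_of_eqOn_canonicalStateSpace {m n : ℕ} {a a' : ℝ} {v v' : Fin (m + n) → ℝ}
    (h : ∀ x ∈ canonicalStateSpace m n, a + v ⬝ᵥ x = a' + v' ⬝ᵥ x) : a = a' ∧ v = v' := by
  have ha : a = a' := by simpa using h 0 (zero_mem_canonicalStateSpace m n)
  refine ⟨ha, funext fun i => ?_⟩
  simpa [ha, dotProduct_single] using h _ (single_one_mem_canonicalStateSpace i)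

theorem affine_semiflow_general
    {m n : ℕ} (T : ℝ)
    (κ : ℝ → Kernel (canonicalStateSpace m n) (canonicalStateSpace m n))
    (hCK : ∀ s t : ℝ, 0 ≤ s → 0 ≤ t → s + t ≤ T →
      ∀ (x : canonicalStateSpace m n) (A : Set (canonicalStateSpace m n)),
        MeasurableSet A → κ (t + s) x A = ∫⁻ y, κ t y A ∂(κ s x))
    (φ : ℝ → (Fin (m + n) → ℝ) → ℝ) (ψ : ℝ → (Fin (m + n) → ℝ) → (Fin (m + n) → ℝ))
    (u : Fin (m + n) → ℝ)
    (haffine : ∀ t : ℝ, 0 ≤ t → t ≤ T → ∀ x : canonicalStateSpace m n,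
      ∫ y : canonicalStateSpace m n, exp (u ⬝ᵥ (y : Fin (m + n) → ℝ)) ∂(κ t x)
        = exp (φ t u + ψ t u ⬝ᵥ (x : Fin (m + n) → ℝ)))
    (haffine' : ∀ s t : ℝ, 0 ≤ s → 0 ≤ t → s + t ≤ T → ∀ x : canonicalStateSpace m n,
      ∫ y : canonicalStateSpace m n, exp (ψ t u ⬝ᵥ (y : Fin (m + n) → ℝ)) ∂(κ s x)
        = exp (φ s (ψ t u) + ψ s (ψ t u) ⬝ᵥ (x : Fin (m + n) → ℝ))) :
    ∀ s t : ℝ, 0 ≤ s → 0 ≤ t → s + t ≤ T →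
      (∀ x : canonicalStateSpace m n,
        φ (t + s) u + ψ (t + s) u ⬝ᵥ (x : Fin (m + n) → ℝ)
          = φ t u + φ s (ψ t u) + ψ s (ψ t u) ⬝ᵥ (x : Fin (m + n) → ℝ)) ∧
      φ (t + s) u = φ t u + φ s (ψ t u) ∧
      ψ (t + s) u = ψ s (ψ t u) := by
  intro s t hs ht hst
  have hcomp : κ (t + s) = κ t ∘ₖ κ s := Kernel.eq_comp_of_apply_eq_lintegral (hCK s t hs ht hst)
  have key : ∀ x : canonicalStateSpace m n,
      φ (t + s) u + ψ (t + s) u ⬝ᵥ (x : Fin (m + n) → ℝ)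
        = φ t u + φ s (ψ t u) + ψ s (ψ t u) ⬝ᵥ (x : Fin (m + n) → ℝ) := by
    intro x
    have h := Kernel.integral_exp_comp (κ t) (κ s) (by fun_prop) (by fun_prop)
      (haffine t ht (by linarith)) (haffine' s t hs ht hst x)
    rw [← hcomp, haffine (t + s) (by linarith) (by linarith) x, exp_eq_exp] at h
    linarith
  obtain ⟨hφ, hψ⟩ := affine_eq_of_eqOn_canonicalStateSpace fun x hx => key ⟨x, hx⟩
  exact ⟨key, hφ, hψ⟩

/-- For a family of Markov kernels on the canonical state space `D` satisfying the
Chapman–Kolmogorov relation, whose exponential moments are of exponentially affine form with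
exponents `φ, ψ`, one has for all `s, t ≥ 0` with `s + t ≤ T` and all `x ∈ D` the identity
`φ (t+s) u + ψ (t+s) u ⬝ᵥ x = φ t u + φ s (ψ t u) + ψ s (ψ t u) ⬝ᵥ x`; consequently (since
`D` has nonempty interior) the semiflow equations `φ (t+s) u = φ t u + φ s (ψ t u)` and
`ψ (t+s) u = ψ s (ψ t u)` hold. -/
theorem affine_semiflow
    {m n : ℕ} (hm : 1 ≤ m) (T : ℝ) (hT : 0 < T)
    (κ : ℝ → Kernel (canonicalStateSpace m n) (canonicalStateSpace m n))
    (hMarkov : ∀ t : ℝ, 0 ≤ t → t ≤ T → IsMarkovKernel (κ t))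
    (hCK : ∀ s t : ℝ, 0 ≤ s → 0 ≤ t → s + t ≤ T →
      ∀ (x : canonicalStateSpace m n) (A : Set (canonicalStateSpace m n)),
        MeasurableSet A → κ (t + s) x A = ∫⁻ y, κ t y A ∂(κ s x))
    (φ : ℝ → (Fin (m + n) → ℝ) → ℝ) (ψ : ℝ → (Fin (m + n) → ℝ) → (Fin (m + n) → ℝ))
    (u : Fin (m + n) → ℝ)
    (haffine : ∀ t : ℝ, 0 ≤ t → t ≤ T → ∀ x : canonicalStateSpace m n,
      ∫ y : canonicalStateSpace m n, exp (u ⬝ᵥ (y : Fin (m + n) → ℝ)) ∂(κ t x)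
        = exp (φ t u + ψ t u ⬝ᵥ (x : Fin (m + n) → ℝ)))
    (haffine' : ∀ s t : ℝ, 0 ≤ s → 0 ≤ t → s + t ≤ T → ∀ x : canonicalStateSpace m n,
      ∫ y : canonicalStateSpace m n, exp (ψ t u ⬝ᵥ (y : Fin (m + n) → ℝ)) ∂(κ s x)
        = exp (φ s (ψ t u) + ψ s (ψ t u) ⬝ᵥ (x : Fin (m + n) → ℝ))) :
    ∀ s t : ℝ, 0 ≤ s → 0 ≤ t → s + t ≤ T →
      (∀ x : canonicalStateSpace m n,
        φ (t + s) u + ψ (t + s) u ⬝ᵥ (x : Fin (m + n) → ℝ)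
          = φ t u + φ s (ψ t u) + ψ s (ψ t u) ⬝ᵥ (x : Fin (m + n) → ℝ)) ∧
      φ (t + s) u = φ t u + φ s (ψ t u) ∧
      ψ (t + s) u = ψ s (ψ t u) :=
  affine_semiflow_general T κ hCK φ ψ u haffine haffine'
end

section
/- Let 0 ≤ s ≤ r ≤ T_k and let w ∈ ℝ^d be such that X has the affine property at ψ_{T−r}(u_k) + w. Assume (φ, ψ) satisfy the semiflow equations at u_k and exp(w·X_r) has finite Q'-expectation. Then, Q'-almost surely, E_{Q'}[exp(w·X_r) | ℱ_s] = exp( φ_{r−s}(ψ_{T−r}(u_k) + w) − φ_{r−s}(ψ_{T−r}(u_k)) + (ψ_{r−s}(ψ_{T−r}(u_k) + w) − ψ_{r−s}(ψ_{T−r}(u_k)))·X_s ). -/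
open MeasureTheory Real Matrix

/-- `X` has the affine property at `u` with exponent functions `φ, ψ`, with respect to the
filtration `ℱ`, the measure `Q` and the horizon `T`. -/
def AffineProperty {Ω : Type*} {m0 : MeasurableSpace Ω} {d : ℕ} (T : ℝ)
    (ℱ : MeasureTheory.Filtration ℝ m0) (Q : Measure Ω) (X : ℝ → Ω → (Fin d → ℝ))
    (φ : ℝ → (Fin d → ℝ) → ℝ) (ψ : ℝ → (Fin d → ℝ) → (Fin d → ℝ))
    (u : Fin d → ℝ) : Prop :=
  ∀ s t : ℝ, 0 ≤ s → s ≤ t → t ≤ T →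
    Integrable (fun ω => exp (u ⬝ᵥ X t ω)) Q ∧
    Q[fun ω => exp (u ⬝ᵥ X t ω)|ℱ s] =ᵐ[Q]
      fun ω => exp (φ (t - s) u + ψ (t - s) u ⬝ᵥ X s ω)

/-- `(φ, ψ)` satisfy the semiflow equations at the vector `v`, up to horizon `T`. -/
def Semiflow {d : ℕ} (T : ℝ) (φ : ℝ → (Fin d → ℝ) → ℝ)
    (ψ : ℝ → (Fin d → ℝ) → (Fin d → ℝ)) (v : Fin d → ℝ) : Prop :=
  (∀ s t : ℝ, 0 ≤ s → 0 ≤ t → t + s ≤ T →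
      φ (t + s) v = φ t v + φ s (ψ t v) ∧ ψ (t + s) v = ψ s (ψ t v)) ∧
    φ 0 v = 0 ∧ ψ 0 v = v

/-- The forward measure `Q'` defined by the density
`dQ'/dQ = exp (φ (T - Tk) uk + ψ (T - Tk) uk ⬝ᵥ X Tk) / exp (φ T uk + ψ T uk ⬝ᵥ x)`. -/
noncomputable def forwardMeasure {Ω : Type*} {m0 : MeasurableSpace Ω} {d : ℕ} (T : ℝ)
    (Q : Measure Ω) (X : ℝ → Ω → (Fin d → ℝ)) (x : Fin d → ℝ)
    (φ : ℝ → (Fin d → ℝ) → ℝ) (ψ : ℝ → (Fin d → ℝ) → (Fin d → ℝ))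
    (Tk : ℝ) (uk : Fin d → ℝ) : Measure Ω :=
  Q.withDensity (fun ω => ENNReal.ofReal
    (exp (φ (T - Tk) uk + ψ (T - Tk) uk ⬝ᵥ X Tk ω) / exp (φ T uk + ψ T uk ⬝ᵥ x)))

/-! Under `Q`, the density of `Q'` on `ℱ_t` is
`L_t = exp (φ_{T-t}(u_k) + ψ_{T-t}(u_k)·X_t - φ_T(u_k) - ψ_T(u_k)·x)`, and `L` is a `Q`-martingale
on `[0, T_k]` by the affine property at `ψ_{T-T_k}(u_k)` and the semiflow equations. By Bayes'
formula `E_{Q'}[e^{w·X_r} | ℱ_s] L_s = E_Q[e^{w·X_r} L_{T_k} | ℱ_s]`. Conditioning on `ℱ_r` first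
replaces `L_{T_k}` by `L_r`, and `e^{w·X_r} L_r` is exponential-affine in `X_r` at
`ψ_{T-r}(u_k) + w`, so the affine property computes its conditional expectation; the semiflow
equations then split off the factor `L_s`. -/

section Bayes

variable {Ω : Type*} {m m0 : MeasurableSpace Ω} {Q : Measure Ω} {D : Ω → ℝ}

lemma integrable_withDensity_ofReal_iff (hD : Measurable D) (hD0 : 0 ≤ᵐ[Q] D) {g : Ω → ℝ} :
    Integrable g (Q.withDensity fun ω => ENNReal.ofReal (D ω)) ↔ Integrable (g * D) Q := by
  rw [integrable_withDensity_iff hD.ennreal_ofReal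
    (ae_of_all _ fun _ => ENNReal.ofReal_lt_top)]
  refine integrable_congr ?_
  filter_upwards [hD0] with ω hω
  simp [ENNReal.toReal_ofReal hω]

lemma setIntegral_withDensity_ofReal (hD : Measurable D) (hD0 : 0 ≤ᵐ[Q] D) (g : Ω → ℝ)
    {A : Set Ω} (hA : MeasurableSet A) :
    ∫ ω in A, g ω ∂Q.withDensity (fun ω => ENNReal.ofReal (D ω)) = ∫ ω in A, g ω * D ω ∂Q := by
  rw [setIntegral_withDensity_eq_setIntegral_toReal_smul hD.ennreal_ofReal
    (ae_of_all _ fun _ => ENNReal.ofReal_lt_top) g hA]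
  refine setIntegral_congr_ae hA ?_
  filter_upwards [hD0] with ω hω _
  simp [ENNReal.toReal_ofReal hω, mul_comm]

lemma trim_withDensity_ofReal_eq_condExp [IsFiniteMeasure Q] (hm : m ≤ m0) (hD0 : 0 ≤ᵐ[Q] D)
    (hD : Integrable D Q) :
    (Q.withDensity fun ω => ENNReal.ofReal (D ω)).trim hm =
      (Q.withDensity fun ω => ENNReal.ofReal (Q[D|m] ω)).trim hm := by
  refine @Measure.ext _ m _ _ fun A hA => ?_
  rw [trim_measurableSet_eq hm hA, trim_measurableSet_eq hm hA,
    withDensity_apply _ (hm A hA), withDensity_apply _ (hm A hA),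
    ← ofReal_integral_eq_lintegral_ofReal hD.integrableOn (ae_restrict_of_ae hD0),
    ← ofReal_integral_eq_lintegral_ofReal integrable_condExp.integrableOn
      (ae_restrict_of_ae (condExp_nonneg hD0)), setIntegral_condExp hm hD hA]

theorem condExp_withDensity_eq_of_condExp_mul [IsFiniteMeasure Q] (hm : m ≤ m0)
    (hDm : Measurable D) (hD0 : 0 ≤ᵐ[Q] D) (hD : Integrable D Q) {Y R : Ω → ℝ}
    (hY : Integrable Y (Q.withDensity fun ω => ENNReal.ofReal (D ω)))
    (hR : StronglyMeasurable[m] R) (hYR : Q[Y * D|m] =ᵐ[Q] R * Q[D|m]) :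
    (Q.withDensity fun ω => ENNReal.ofReal (D ω))[Y|m]
      =ᵐ[Q.withDensity fun ω => ENNReal.ofReal (D ω)] R := by
  have hρm : Measurable (Q[D|m]) := stronglyMeasurable_condExp.measurable.mono hm le_rfl
  have hρ0 : 0 ≤ᵐ[Q] Q[D|m] := condExp_nonneg hD0
  have htrim := trim_withDensity_ofReal_eq_condExp hm hD0 hD
  have := isFiniteMeasure_withDensity_ofReal hD.2
  have hRρ : Integrable R (Q.withDensity fun ω => ENNReal.ofReal (Q[D|m] ω)) :=
    (integrable_withDensity_ofReal_iff hρm hρ0).2 (integrable_condExp.congr hYR)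
  have hRμ : Integrable R (Q.withDensity fun ω => ENNReal.ofReal (D ω)) :=
    integrable_of_integrable_trim hm (htrim ▸ hRρ.trim hm hR)
  refine (ae_eq_condExp_of_forall_setIntegral_eq hm hY (fun A _ _ => hRμ.integrableOn)
    (fun A hA _ => ?_) hR.aestronglyMeasurable).symm
  calc ∫ ω in A, R ω ∂Q.withDensity (fun ω => ENNReal.ofReal (D ω))
      = ∫ ω in A, R ω ∂Q.withDensity (fun ω => ENNReal.ofReal (Q[D|m] ω)) := by
        rw [setIntegral_trim hm hR hA, htrim, ← setIntegral_trim hm hR hA]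
    _ = ∫ ω in A, (R * Q[D|m]) ω ∂Q := setIntegral_withDensity_ofReal hρm hρ0 R (hm A hA)
    _ = ∫ ω in A, (Q[Y * D|m]) ω ∂Q := setIntegral_congr_ae (hm A hA) (hYR.mono fun _ h _ => h.symm)
    _ = ∫ ω in A, Y ω ∂Q.withDensity (fun ω => ENNReal.ofReal (D ω)) := by
        rw [setIntegral_condExp hm ((integrable_withDensity_ofReal_iff hDm hD0).1 hY) hA,
          setIntegral_withDensity_ofReal hDm hD0 Y (hm A hA)]
        rfl

end Bayes

lemma condExp_mul_eq_condExp_mul_of_condExp_eq {Ω : Type*} {m₁ m₂ m0 : MeasurableSpace Ω}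
    {Q : Measure Ω} [IsFiniteMeasure Q] (h₁₂ : m₁ ≤ m₂) (h₂ : m₂ ≤ m0) {Y D L : Ω → ℝ}
    (hY : StronglyMeasurable[m₂] Y) (hYD : Integrable (Y * D) Q) (hD : Integrable D Q)
    (hDL : Q[D|m₂] =ᵐ[Q] L) :
    Q[Y * D|m₁] =ᵐ[Q] Q[Y * L|m₁] :=
  (condExp_condExp_of_le h₁₂ h₂).symm.trans <| condExp_congr_ae <|
    (condExp_mul_of_stronglyMeasurable_left hY hYD hD).trans (Filter.EventuallyEq.rfl.mul hDL)

lemma Semiflow.eq_of_le {d : ℕ} {T : ℝ} {φ : ℝ → (Fin d → ℝ) → ℝ}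
    {ψ : ℝ → (Fin d → ℝ) → (Fin d → ℝ)} {v : Fin d → ℝ} (h : Semiflow T φ ψ v) {a b : ℝ}
    (ha : 0 ≤ a) (hab : a ≤ b) (hb : b ≤ T) :
    φ b v = φ a v + φ (b - a) (ψ a v) ∧ ψ b v = ψ (b - a) (ψ a v) := by
  simpa using h.1 (b - a) a (sub_nonneg.2 hab) ha (by linarith)

lemma measurable_exp_const_add_dotProduct {Ω : Type*} {m : MeasurableSpace Ω} {d : ℕ}
    {f : Ω → Fin d → ℝ} (hf : Measurable f) (a : ℝ) (u : Fin d → ℝ) :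
    Measurable fun ω => exp (a + u ⬝ᵥ f ω) := by
  fun_prop

section Affine

variable {Ω : Type*} {m0 : MeasurableSpace Ω} {d : ℕ} {T : ℝ} {ℱ : Filtration ℝ m0}
  {Q : Measure Ω} {X : ℝ → Ω → (Fin d → ℝ)} {φ : ℝ → (Fin d → ℝ) → ℝ}
  {ψ : ℝ → (Fin d → ℝ) → (Fin d → ℝ)} {u : Fin d → ℝ}

lemma AffineProperty.integrable_exp_const_add (h : AffineProperty T ℱ Q X φ ψ u) (a : ℝ)
    {t : ℝ} (ht : 0 ≤ t) (htT : t ≤ T) :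
    Integrable (fun ω => exp (a + u ⬝ᵥ X t ω)) Q := by
  simpa only [exp_add] using (h t t ht le_rfl htT).1.const_mul (exp a)

lemma AffineProperty.condExp_exp_const_add (h : AffineProperty T ℱ Q X φ ψ u) (a : ℝ)
    {s t : ℝ} (hs : 0 ≤ s) (hst : s ≤ t) (htT : t ≤ T) :
    Q[fun ω => exp (a + u ⬝ᵥ X t ω)|ℱ s]
      =ᵐ[Q] fun ω => exp (a + φ (t - s) u + ψ (t - s) u ⬝ᵥ X s ω) := by
  have hsmul : (fun ω => exp (a + u ⬝ᵥ X t ω)) = exp a • fun ω => exp (u ⬝ᵥ X t ω) := by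
    ext ω; simp [exp_add]
  rw [hsmul]
  filter_upwards [condExp_smul (exp a) (fun ω => exp (u ⬝ᵥ X t ω)) (ℱ s),
    (h s t hs hst htT).2] with ω h₁ h₂
  simp [h₁, h₂, exp_add, mul_assoc]

end Affine

noncomputable def forwardDensity {Ω : Type*} {d : ℕ} (T : ℝ) (X : ℝ → Ω → (Fin d → ℝ))
    (x : Fin d → ℝ) (φ : ℝ → (Fin d → ℝ) → ℝ) (ψ : ℝ → (Fin d → ℝ) → (Fin d → ℝ))
    (uk : Fin d → ℝ) (t : ℝ) (ω : Ω) : ℝ :=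
  exp (φ (T - t) uk - (φ T uk + ψ T uk ⬝ᵥ x) + ψ (T - t) uk ⬝ᵥ X t ω)

section ForwardMeasure

variable {Ω : Type*} {m0 : MeasurableSpace Ω} {d : ℕ} {T : ℝ} {ℱ : Filtration ℝ m0}
  {Q : Measure Ω} {X : ℝ → Ω → (Fin d → ℝ)} {x : Fin d → ℝ} {φ : ℝ → (Fin d → ℝ) → ℝ}
  {ψ : ℝ → (Fin d → ℝ) → (Fin d → ℝ)} {Tk : ℝ} {uk : Fin d → ℝ}

lemma forwardMeasure_eq_withDensity :
    forwardMeasure T Q X x φ ψ Tk uk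
      = Q.withDensity fun ω => ENNReal.ofReal (forwardDensity T X x φ ψ uk Tk ω) := by
  simp only [forwardMeasure, forwardDensity, ← exp_sub]
  congr with ω
  ring_nf

lemma condExp_forwardDensity (hflow : Semiflow T φ ψ uk)
    (haff : AffineProperty T ℱ Q X φ ψ (ψ (T - Tk) uk)) {t : ℝ} (ht : 0 ≤ t) (htTk : t ≤ Tk)
    (hTkT : Tk ≤ T) :
    Q[forwardDensity T X x φ ψ uk Tk|ℱ t] =ᵐ[Q] forwardDensity T X x φ ψ uk t := by
  obtain ⟨hφ, hψ⟩ := hflow.eq_of_le (a := T - Tk) (b := T - t) (by linarith) (by linarith)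
    (by linarith)
  refine (haff.condExp_exp_const_add _ ht htTk hTkT).trans (ae_of_all _ fun ω => ?_)
  rw [forwardDensity, hφ, hψ, show T - t - (T - Tk) = Tk - t by ring]
  ring_nf

end ForwardMeasure

lemma condExp_exp_dotProduct_mul_forwardDensity {Ω : Type*} {m0 : MeasurableSpace Ω} {d : ℕ}
    {T : ℝ} {ℱ : Filtration ℝ m0} {Q : Measure Ω} [IsFiniteMeasure Q]
    {X : ℝ → Ω → (Fin d → ℝ)} {x : Fin d → ℝ} {φ : ℝ → (Fin d → ℝ) → ℝ}
    {ψ : ℝ → (Fin d → ℝ) → (Fin d → ℝ)} {Tk : ℝ} {uk w : Fin d → ℝ} {s r : ℝ}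
    (hflow : Semiflow T φ ψ uk) (haff : AffineProperty T ℱ Q X φ ψ (ψ (T - Tk) uk))
    (haff_w : AffineProperty T ℱ Q X φ ψ (ψ (T - r) uk + w))
    (hs : 0 ≤ s) (hsr : s ≤ r) (hrTk : r ≤ Tk) (hTkT : Tk ≤ T)
    (hXr : Measurable[ℱ r] (X r))
    (hint : Integrable ((fun ω => exp (w ⬝ᵥ X r ω)) * forwardDensity T X x φ ψ uk Tk) Q) :
    Q[(fun ω => exp (w ⬝ᵥ X r ω)) * forwardDensity T X x φ ψ uk Tk|ℱ s]
      =ᵐ[Q] (fun ω => exp (φ (r - s) (ψ (T - r) uk + w) - φ (r - s) (ψ (T - r) uk)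
        + (ψ (r - s) (ψ (T - r) uk + w) - ψ (r - s) (ψ (T - r) uk)) ⬝ᵥ X s ω))
        * forwardDensity T X x φ ψ uk s := by
  obtain ⟨hφ, hψ⟩ := hflow.eq_of_le (a := T - r) (b := T - s) (by linarith) (by linarith)
    (by linarith)
  rw [show T - s - (T - r) = r - s by ring] at hφ hψ
  calc Q[(fun ω => exp (w ⬝ᵥ X r ω)) * forwardDensity T X x φ ψ uk Tk|ℱ s]
      =ᵐ[Q] Q[(fun ω => exp (w ⬝ᵥ X r ω)) * forwardDensity T X x φ ψ uk r|ℱ s] :=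
        condExp_mul_eq_condExp_mul_of_condExp_eq (ℱ.mono hsr) (ℱ.le r)
          (by fun_prop) hint (haff.integrable_exp_const_add _ (by linarith) hTkT)
          (condExp_forwardDensity hflow haff (by linarith) hrTk hTkT)
    _ = Q[fun ω => exp (φ (T - r) uk - (φ T uk + ψ T uk ⬝ᵥ x)
          + (ψ (T - r) uk + w) ⬝ᵥ X r ω)|ℱ s] := by
        congr with ω
        simp only [Pi.mul_apply, forwardDensity, ← exp_add, add_dotProduct]
        congr 1
        ring
    _ =ᵐ[Q] fun ω => exp (φ (T - r) uk - (φ T uk + ψ T uk ⬝ᵥ x) + φ (r - s) (ψ (T - r) uk + w)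
        + ψ (r - s) (ψ (T - r) uk + w) ⬝ᵥ X s ω) :=
        haff_w.condExp_exp_const_add _ hs hsr (by linarith)
    _ = _ := by
        ext ω
        simp only [Pi.mul_apply, forwardDensity, ← exp_add, sub_dotProduct, hφ, hψ]
        congr 1
        ring

theorem forward_measure_mgf_general
    {Ω : Type*} {m0 : MeasurableSpace Ω} {d : ℕ} (T : ℝ)
    (ℱ : MeasureTheory.Filtration ℝ m0) (Q : Measure Ω) [IsProbabilityMeasure Q]
    (X : ℝ → Ω → (Fin d → ℝ)) (x : Fin d → ℝ)
    (hadapted : ∀ t : ℝ, 0 ≤ t → t ≤ T → Measurable[ℱ t] (X t))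
    (φ : ℝ → (Fin d → ℝ) → ℝ) (ψ : ℝ → (Fin d → ℝ) → (Fin d → ℝ))
    (Tk : ℝ) (hTk0 : 0 ≤ Tk) (hTkT : Tk ≤ T) (uk : Fin d → ℝ)
    (haffine_psi : AffineProperty T ℱ Q X φ ψ (ψ (T - Tk) uk))
    (s r : ℝ) (hs : 0 ≤ s) (hsr : s ≤ r) (hrTk : r ≤ Tk)
    (w : Fin d → ℝ)
    (haffine_w : AffineProperty T ℱ Q X φ ψ (ψ (T - r) uk + w))
    (hsemiflow : Semiflow T φ ψ uk)
    (hint : Integrable (fun ω => exp (w ⬝ᵥ X r ω))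
      (forwardMeasure T Q X x φ ψ Tk uk)) :
    (forwardMeasure T Q X x φ ψ Tk uk)[fun ω => exp (w ⬝ᵥ X r ω)|ℱ s]
      =ᵐ[forwardMeasure T Q X x φ ψ Tk uk]
    fun ω => exp (φ (r - s) (ψ (T - r) uk + w) - φ (r - s) (ψ (T - r) uk)
      + (ψ (r - s) (ψ (T - r) uk + w) - ψ (r - s) (ψ (T - r) uk)) ⬝ᵥ X s ω) := by
  rw [forwardMeasure_eq_withDensity] at hint ⊢
  have hL_meas : Measurable (forwardDensity T X x φ ψ uk Tk) :=
    measurable_exp_const_add_dotProduct ((hadapted Tk hTk0 hTkT).mono (ℱ.le Tk) le_rfl) _ _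
  have hL_nonneg : 0 ≤ᵐ[Q] forwardDensity T X x φ ψ uk Tk := ae_of_all _ fun _ => (exp_pos _).le
  have hR_meas := measurable_exp_const_add_dotProduct (hadapted s hs (by linarith))
    (φ (r - s) (ψ (T - r) uk + w) - φ (r - s) (ψ (T - r) uk))
    (ψ (r - s) (ψ (T - r) uk + w) - ψ (r - s) (ψ (T - r) uk))
  refine condExp_withDensity_eq_of_condExp_mul (ℱ.le s) hL_meas hL_nonneg
    (haffine_psi.integrable_exp_const_add _ hTk0 hTkT) hint hR_meas.stronglyMeasurable ?_
  have hnum := condExp_exp_dotProduct_mul_forwardDensity hsemiflow haffine_psi haffine_w hs hsr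
    hrTk hTkT (hadapted r (by linarith) (by linarith))
    ((integrable_withDensity_ofReal_iff hL_meas hL_nonneg).1 hint)
  have hden := condExp_forwardDensity (x := x) hsemiflow haffine_psi hs (by linarith) hTkT
  exact hnum.trans (Filter.EventuallyEq.rfl.mul hden.symm)

/-- Under the forward measure `Q'`, for `0 ≤ s ≤ r ≤ Tk` and `w` such that `X` has the affine
property at `ψ (T - r) uk + w`, one has `Q'`-a.s.
`E_{Q'}[exp (w ⬝ᵥ X r) | ℱ s]
  = exp (φ (r-s) (ψ (T-r) uk + w) - φ (r-s) (ψ (T-r) uk)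
      + (ψ (r-s) (ψ (T-r) uk + w) - ψ (r-s) (ψ (T-r) uk)) ⬝ᵥ X s)`. -/
theorem forward_measure_mgf
    {Ω : Type*} {m0 : MeasurableSpace Ω} {d : ℕ} (T : ℝ) (hT : 0 < T)
    (ℱ : MeasureTheory.Filtration ℝ m0) (Q : Measure Ω) [IsProbabilityMeasure Q]
    (X : ℝ → Ω → (Fin d → ℝ)) (x : Fin d → ℝ)
    (hadapted : ∀ t : ℝ, 0 ≤ t → t ≤ T → Measurable[ℱ t] (X t))
    (hX0 : ∀ ω, X 0 ω = x)
    (φ : ℝ → (Fin d → ℝ) → ℝ) (ψ : ℝ → (Fin d → ℝ) → (Fin d → ℝ))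
    (Tk : ℝ) (hTk0 : 0 ≤ Tk) (hTkT : Tk ≤ T) (uk : Fin d → ℝ)
    (haffine_uk : AffineProperty T ℱ Q X φ ψ uk)
    (haffine_psi : AffineProperty T ℱ Q X φ ψ (ψ (T - Tk) uk))
    (s r : ℝ) (hs : 0 ≤ s) (hsr : s ≤ r) (hrTk : r ≤ Tk)
    (w : Fin d → ℝ)
    (haffine_w : AffineProperty T ℱ Q X φ ψ (ψ (T - r) uk + w))
    (hsemiflow : Semiflow T φ ψ uk)
    (hint : Integrable (fun ω => exp (w ⬝ᵥ X r ω))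
      (forwardMeasure T Q X x φ ψ Tk uk)) :
    (forwardMeasure T Q X x φ ψ Tk uk)[fun ω => exp (w ⬝ᵥ X r ω)|ℱ s]
      =ᵐ[forwardMeasure T Q X x φ ψ Tk uk]
    fun ω => exp (φ (r - s) (ψ (T - r) uk + w) - φ (r - s) (ψ (T - r) uk)
      + (ψ (r - s) (ψ (T - r) uk + w) - ψ (r - s) (ψ (T - r) uk)) ⬝ᵥ X s ω) :=
  forward_measure_mgf_general T ℱ Q X x hadapted φ ψ Tk hTk0 hTkT uk haffine_psi s r hs hsr hrTk w
    haffine_w hsemiflow hint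
end

section
/- Let 0 ≤ s ≤ r ≤ t ≤ T_k and let u, w ∈ ℝ^d be such that X has the affine property at ψ_{T−t}(u_k) + w and at ψ_{t−r}(ψ_{T−t}(u_k) + w) + u, and assume (φ, ψ) satisfy the semiflow equations at u_k. Then, Q'-almost surely, E_{Q'}[exp(u·X_r + w·X_t) | ℱ_s] = exp( φ_{t−r}(ψ_{T−t}(u_k) + w) + φ_{r−s}(ψ_{t−r}(ψ_{T−t}(u_k) + w) + u) − φ_{t−s}(ψ_{T−t}(u_k)) + (ψ_{r−s}(ψ_{t−r}(ψ_{T−t}(u_k) + w) + u) − ψ_{T−s}(u_k))·X_s ). -/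
open MeasureTheory Real Matrix

/-! Under `Q'` the conditional expectation of `g = exp (u ⬝ᵥ X r + w ⬝ᵥ X t)` is determined by
`∫_A g dQ' = ∫_A R dQ'` for `A ∈ ℱ s`, i.e. by
`E_Q[1_A g e^{v₀ ⬝ᵥ X Tk}] = E_Q[1_A R e^{v₀ ⬝ᵥ X Tk}]` with `v₀ = ψ (T - Tk) uk`.
The left side is computed by conditioning successively on `ℱ t`, `ℱ r` and `ℱ s`, the right
side by conditioning once on `ℱ s`; each step trades `exp (v ⬝ᵥ X b)` for
`exp (φ (b - a) v + ψ (b - a) v ⬝ᵥ X a)`. The semiflow equations identify `ψ (Tk - τ) v₀` with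
`ψ (T - τ) uk`, after which both sides are the same multiple of one integral
`∫_A exp (v ⬝ᵥ X s) dQ`. -/

open scoped ENNReal

theorem ENNReal.ofReal_exp_add (a b : ℝ) :
    ENNReal.ofReal (exp (a + b)) = ENNReal.ofReal (exp a) * ENNReal.ofReal (exp b) := by
  rw [exp_add, ENNReal.ofReal_mul (exp_pos a).le]

namespace MeasureTheory

variable {Ω : Type*} {m m0 : MeasurableSpace Ω} {μ : Measure Ω}

theorem lintegral_mul_eq_of_forall_setLIntegral_eq (hm : m ≤ m0) {F G : Ω → ℝ≥0∞}
    (hF : AEMeasurable F μ) (hG : AEMeasurable G μ)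
    (hFG : ∀ A, MeasurableSet[m] A → ∫⁻ ω in A, F ω ∂μ = ∫⁻ ω in A, G ω ∂μ)
    {Z : Ω → ℝ≥0∞} (hZ : Measurable[m] Z) :
    ∫⁻ ω, Z ω * F ω ∂μ = ∫⁻ ω, Z ω * G ω ∂μ := by
  have htrim : (μ.withDensity F).trim hm = (μ.withDensity G).trim hm := by
    refine @Measure.ext Ω m _ _ fun A hA => ?_
    rw [trim_measurableSet_eq hm hA, trim_measurableSet_eq hm hA,
      withDensity_apply _ (hm _ hA), withDensity_apply _ (hm _ hA), hFG A hA]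
  have hZ_trim : ∀ H : Ω → ℝ≥0∞, AEMeasurable H μ →
      ∫⁻ ω, Z ω * H ω ∂μ = ∫⁻ ω, Z ω ∂(μ.withDensity H).trim hm := fun H hH => by
    rw [lintegral_trim hm hZ, lintegral_withDensity_eq_lintegral_mul₀ hH
      (hZ.mono hm le_rfl).aemeasurable]
    simp only [Pi.mul_apply, mul_comm]
  rw [hZ_trim F hF, hZ_trim G hG, htrim]

theorem setLIntegral_ofReal_condExp (hm : m ≤ m0) [SigmaFinite (μ.trim hm)] {Y : Ω → ℝ}
    (hY : Integrable Y μ) (hY0 : 0 ≤ᵐ[μ] Y) {A : Set Ω} (hA : MeasurableSet[m] A) :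
    ∫⁻ ω in A, ENNReal.ofReal (μ[Y|m] ω) ∂μ = ∫⁻ ω in A, ENNReal.ofReal (Y ω) ∂μ := by
  rw [← ofReal_integral_eq_lintegral_ofReal integrable_condExp.restrict
      (ae_restrict_of_ae (condExp_nonneg hY0)),
    ← ofReal_integral_eq_lintegral_ofReal hY.restrict (ae_restrict_of_ae hY0),
    setIntegral_condExp hm hY hA]

theorem condExp_ae_eq_of_forall_setLIntegral_eq (hm : m ≤ m0) [SigmaFinite (μ.trim hm)]
    {f g : Ω → ℝ} (hf : AEStronglyMeasurable f μ) (hf0 : 0 ≤ᵐ[μ] f)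
    (hg : StronglyMeasurable[m] g) (hg0 : 0 ≤ᵐ[μ] g)
    (hfi : ∫⁻ ω, ENNReal.ofReal (f ω) ∂μ ≠ ∞)
    (hfg : ∀ A, MeasurableSet[m] A →
      ∫⁻ ω in A, ENNReal.ofReal (f ω) ∂μ = ∫⁻ ω in A, ENNReal.ofReal (g ω) ∂μ) :
    μ[f|m] =ᵐ[μ] g := by
  have hg' : AEStronglyMeasurable g μ := (hg.mono hm).aestronglyMeasurable
  have hfint : Integrable f μ := (lintegral_ofReal_ne_top_iff_integrable hf hf0).1 hfi
  have hgint : Integrable g μ := by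
    refine (lintegral_ofReal_ne_top_iff_integrable hg' hg0).1 ?_
    rwa [← setLIntegral_univ, ← hfg _ MeasurableSet.univ, setLIntegral_univ]
  refine (ae_eq_condExp_of_forall_setIntegral_eq hm hfint (fun A _ _ => hgint.integrableOn)
    (fun A hA _ => ?_) hg.aestronglyMeasurable).symm
  rw [integral_eq_lintegral_of_nonneg_ae (ae_restrict_of_ae hg0) hg'.restrict,
    integral_eq_lintegral_of_nonneg_ae (ae_restrict_of_ae hf0) hf.restrict, hfg A hA]

end MeasureTheory

section AffineProcess

variable {Ω : Type*} {m0 : MeasurableSpace Ω} {d : ℕ} {T : ℝ} {ℱ : Filtration ℝ m0}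
  {Q : Measure Ω} {X : ℝ → Ω → Fin d → ℝ} {φ : ℝ → (Fin d → ℝ) → ℝ}
  {ψ : ℝ → (Fin d → ℝ) → Fin d → ℝ} {s t : ℝ} {v : Fin d → ℝ}

namespace AffineProperty

theorem integrable_exp_psi_dotProduct (h : AffineProperty T ℱ Q X φ ψ v) (hs : 0 ≤ s)
    (hst : s ≤ t) (ht : t ≤ T) : Integrable (fun ω => exp (ψ (t - s) v ⬝ᵥ X s ω)) Q := by
  have hint : Integrable (fun ω => exp (φ (t - s) v + ψ (t - s) v ⬝ᵥ X s ω)) Q :=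
    integrable_condExp.congr (h s t hs hst ht).2
  refine (hint.const_mul (exp (-φ (t - s) v))).congr (ae_of_all _ fun ω => ?_)
  simp only [← exp_add, neg_add_cancel_left]

theorem setLIntegral_mul_exp [IsFiniteMeasure Q] (h : AffineProperty T ℱ Q X φ ψ v)
    (hs : 0 ≤ s) (hst : s ≤ t) (ht : t ≤ T) {A : Set Ω} (hA : MeasurableSet[ℱ s] A)
    {H : Ω → ℝ≥0∞} (hH : Measurable[ℱ s] H) :
    ∫⁻ ω in A, H ω * ENNReal.ofReal (exp (v ⬝ᵥ X t ω)) ∂Q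
      = ENNReal.ofReal (exp (φ (t - s) v))
        * ∫⁻ ω in A, H ω * ENNReal.ofReal (exp (ψ (t - s) v ⬝ᵥ X s ω)) ∂Q := by
  obtain ⟨hint, hce⟩ := h s t hs hst ht
  simp_rw [← lintegral_indicator (ℱ.le s _ hA), Set.indicator_mul_left]
  calc ∫⁻ ω, A.indicator H ω * ENNReal.ofReal (exp (v ⬝ᵥ X t ω)) ∂Q
      = ∫⁻ ω, A.indicator H ω * ENNReal.ofReal (Q[fun ω => exp (v ⬝ᵥ X t ω)|ℱ s] ω) ∂Q :=
        lintegral_mul_eq_of_forall_setLIntegral_eq (ℱ.le s) hint.aemeasurable.ennreal_ofReal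
          integrable_condExp.aemeasurable.ennreal_ofReal
          (fun B hB => (setLIntegral_ofReal_condExp (ℱ.le s) hint
            (ae_of_all _ fun _ => (exp_pos _).le) hB).symm) (hH.indicator hA)
    _ = ∫⁻ ω, A.indicator H ω * ENNReal.ofReal (exp (φ (t - s) v + ψ (t - s) v ⬝ᵥ X s ω)) ∂Q :=
        lintegral_congr_ae (by filter_upwards [hce] with ω hω; rw [hω])
    _ = _ := by
        simp_rw [ENNReal.ofReal_exp_add, mul_left_comm _ (ENNReal.ofReal (exp (φ _ _)))]
        exact lintegral_const_mul' _ _ ENNReal.ofReal_ne_top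

theorem setLIntegral_exp_add_mul_exp [IsFiniteMeasure Q]
    (hX : ∀ t : ℝ, 0 ≤ t → t ≤ T → Measurable[ℱ t] (X t)) {r τ : ℝ} {u w c : Fin d → ℝ}
    (hc : AffineProperty T ℱ Q X φ ψ c)
    (hw : AffineProperty T ℱ Q X φ ψ (ψ (τ - t) c + w))
    (hu : AffineProperty T ℱ Q X φ ψ (ψ (t - r) (ψ (τ - t) c + w) + u))
    (hs : 0 ≤ s) (hsr : s ≤ r) (hrt : r ≤ t) (htτ : t ≤ τ) (hτ : τ ≤ T)
    {A : Set Ω} (hA : MeasurableSet[ℱ s] A) :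
    ∫⁻ ω in A, ENNReal.ofReal (exp (u ⬝ᵥ X r ω + w ⬝ᵥ X t ω))
        * ENNReal.ofReal (exp (c ⬝ᵥ X τ ω)) ∂Q
      = ENNReal.ofReal (exp (φ (τ - t) c + φ (t - r) (ψ (τ - t) c + w)
          + φ (r - s) (ψ (t - r) (ψ (τ - t) c + w) + u)))
        * ∫⁻ ω in A, ENNReal.ofReal
          (exp (ψ (r - s) (ψ (t - r) (ψ (τ - t) c + w) + u) ⬝ᵥ X s ω)) ∂Q := by
  have hr : 0 ≤ r := hs.trans hsr
  have hXr : Measurable[ℱ r] (X r) := hX r hr (by linarith)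
  have hXt : Measurable[ℱ t] (X t) := hX t (by linarith) (by linarith)
  have hXrt : Measurable[ℱ t] (X r) := hXr.mono (ℱ.mono hrt) le_rfl
  set v₁ := ψ (τ - t) c + w
  set v₂ := ψ (t - r) v₁ + u
  calc ∫⁻ ω in A, ENNReal.ofReal (exp (u ⬝ᵥ X r ω + w ⬝ᵥ X t ω))
        * ENNReal.ofReal (exp (c ⬝ᵥ X τ ω)) ∂Q
      = ENNReal.ofReal (exp (φ (τ - t) c)) * ∫⁻ ω in A, ENNReal.ofReal
          (exp (u ⬝ᵥ X r ω + w ⬝ᵥ X t ω)) * ENNReal.ofReal (exp (ψ (τ - t) c ⬝ᵥ X t ω)) ∂Q :=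
        hc.setLIntegral_mul_exp (by linarith) htτ hτ (ℱ.mono (hsr.trans hrt) _ hA) (by fun_prop)
    _ = ENNReal.ofReal (exp (φ (τ - t) c)) * ∫⁻ ω in A, ENNReal.ofReal (exp (u ⬝ᵥ X r ω))
          * ENNReal.ofReal (exp (v₁ ⬝ᵥ X t ω)) ∂Q := by
        congr 1
        refine lintegral_congr fun ω => ?_
        rw [← ENNReal.ofReal_exp_add, ← ENNReal.ofReal_exp_add, add_dotProduct, add_assoc,
          add_comm (w ⬝ᵥ _)]
    _ = ENNReal.ofReal (exp (φ (τ - t) c)) * (ENNReal.ofReal (exp (φ (t - r) v₁))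
          * ∫⁻ ω in A, 1 * ENNReal.ofReal (exp (v₂ ⬝ᵥ X r ω)) ∂Q) := by
        rw [hw.setLIntegral_mul_exp hr hrt (htτ.trans hτ) (ℱ.mono hsr _ hA) (by fun_prop)]
        congr 2
        refine lintegral_congr fun ω => ?_
        rw [← ENNReal.ofReal_exp_add, one_mul, add_dotProduct, add_comm]
    _ = _ := by
        rw [hu.setLIntegral_mul_exp hs hsr (hrt.trans (htτ.trans hτ)) hA measurable_const]
        simp only [one_mul, ENNReal.ofReal_exp_add, mul_assoc]

theorem setLIntegral_exp_affine_mul_exp [IsFiniteMeasure Q] {τ : ℝ} {a : ℝ} {b : Fin d → ℝ}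
    (h : AffineProperty T ℱ Q X φ ψ v) (hXs : Measurable[ℱ s] (X s))
    (hs : 0 ≤ s) (hsτ : s ≤ τ) (hτ : τ ≤ T) {A : Set Ω} (hA : MeasurableSet[ℱ s] A) :
    ∫⁻ ω in A, ENNReal.ofReal (exp (a + b ⬝ᵥ X s ω)) * ENNReal.ofReal (exp (v ⬝ᵥ X τ ω)) ∂Q
      = ENNReal.ofReal (exp (a + φ (τ - s) v))
        * ∫⁻ ω in A, ENNReal.ofReal (exp ((b + ψ (τ - s) v) ⬝ᵥ X s ω)) ∂Q := by
  rw [h.setLIntegral_mul_exp hs hsτ hτ hA (by fun_prop), add_comm a, ENNReal.ofReal_exp_add,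
    mul_assoc]
  congr 1
  rw [← lintegral_const_mul' _ _ ENNReal.ofReal_ne_top]
  refine lintegral_congr fun ω => ?_
  rw [← ENNReal.ofReal_exp_add, ← ENNReal.ofReal_exp_add, add_dotProduct, add_assoc]

end AffineProperty

theorem Semiflow.phi_psi_sub_of_le {d : ℕ} {T : ℝ} {φ : ℝ → (Fin d → ℝ) → ℝ}
    {ψ : ℝ → (Fin d → ℝ) → Fin d → ℝ} {v : Fin d → ℝ} (h : Semiflow T φ ψ v) {σ τ : ℝ}
    (hτ : 0 ≤ τ) (hτσ : τ ≤ σ) (hσ : σ ≤ T) :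
    φ (T - τ) v = φ (T - σ) v + φ (σ - τ) (ψ (T - σ) v)
      ∧ ψ (T - τ) v = ψ (σ - τ) (ψ (T - σ) v) := by
  have := h.1 (σ - τ) (T - σ) (by linarith) (by linarith) (by linarith)
  rwa [sub_add_sub_cancel] at this

section ForwardMeasure

variable {x : Fin d → ℝ} {Tk : ℝ} {uk : Fin d → ℝ}

theorem isFiniteMeasure_forwardMeasure (h : AffineProperty T ℱ Q X φ ψ (ψ (T - Tk) uk))
    (hTk0 : 0 ≤ Tk) (hTkT : Tk ≤ T) : IsFiniteMeasure (forwardMeasure T Q X x φ ψ Tk uk) := by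
  refine isFiniteMeasure_withDensity_ofReal ?_
  refine ((h Tk Tk hTk0 le_rfl hTkT).1.const_mul
    (exp (φ (T - Tk) uk) / exp (φ T uk + ψ T uk ⬝ᵥ x))).hasFiniteIntegral.congr
    (ae_of_all _ fun ω => ?_)
  dsimp only
  rw [exp_add (φ (T - Tk) uk)]
  ring

theorem setLIntegral_forwardMeasure (hXTk : Measurable (X Tk)) {F : Ω → ℝ≥0∞}
    (hF : Measurable F) {A : Set Ω} (hA : MeasurableSet A) :
    ∫⁻ ω in A, F ω ∂forwardMeasure T Q X x φ ψ Tk uk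
      = ENNReal.ofReal (exp (φ (T - Tk) uk - (φ T uk + ψ T uk ⬝ᵥ x)))
        * ∫⁻ ω in A, F ω * ENNReal.ofReal (exp (ψ (T - Tk) uk ⬝ᵥ X Tk ω)) ∂Q := by
  rw [forwardMeasure, setLIntegral_withDensity_eq_setLIntegral_mul _ (by fun_prop) hF hA,
    ← lintegral_const_mul' _ _ ENNReal.ofReal_ne_top]
  refine lintegral_congr fun ω => ?_
  rw [Pi.mul_apply, mul_left_comm, ← ENNReal.ofReal_exp_add, ← exp_sub]
  ring_nf

end ForwardMeasure

end AffineProcess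

theorem forward_measure_joint_mgf_general
    {Ω : Type*} {m0 : MeasurableSpace Ω} {d : ℕ} (T : ℝ)
    (ℱ : MeasureTheory.Filtration ℝ m0) (Q : Measure Ω) [IsProbabilityMeasure Q]
    (X : ℝ → Ω → (Fin d → ℝ)) (x : Fin d → ℝ)
    (hadapted : ∀ t : ℝ, 0 ≤ t → t ≤ T → Measurable[ℱ t] (X t))
    (φ : ℝ → (Fin d → ℝ) → ℝ) (ψ : ℝ → (Fin d → ℝ) → (Fin d → ℝ))
    (Tk : ℝ) (hTk0 : 0 ≤ Tk) (hTkT : Tk ≤ T) (uk : Fin d → ℝ)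
    (haffine_psi : AffineProperty T ℱ Q X φ ψ (ψ (T - Tk) uk))
    (s r t : ℝ) (hs : 0 ≤ s) (hsr : s ≤ r) (hrt : r ≤ t) (htTk : t ≤ Tk)
    (u w : Fin d → ℝ)
    (haffine_w : AffineProperty T ℱ Q X φ ψ (ψ (T - t) uk + w))
    (haffine_u : AffineProperty T ℱ Q X φ ψ (ψ (t - r) (ψ (T - t) uk + w) + u))
    (hsemiflow : Semiflow T φ ψ uk) :
    (forwardMeasure T Q X x φ ψ Tk uk)[fun ω => exp (u ⬝ᵥ X r ω + w ⬝ᵥ X t ω)|ℱ s]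
      =ᵐ[forwardMeasure T Q X x φ ψ Tk uk]
    fun ω => exp (φ (t - r) (ψ (T - t) uk + w)
      + φ (r - s) (ψ (t - r) (ψ (T - t) uk + w) + u)
      - φ (t - s) (ψ (T - t) uk)
      + (ψ (r - s) (ψ (t - r) (ψ (T - t) uk + w) + u) - ψ (T - s) uk) ⬝ᵥ X s ω) := by
  have hX : ∀ τ, 0 ≤ τ → τ ≤ T → Measurable (X τ) :=
    fun τ h₀ hτ => (hadapted τ h₀ hτ).mono (ℱ.le τ) le_rfl
  have hXr := hX r (by linarith) (by linarith)
  have hXt := hX t (by linarith) (by linarith)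
  have hXs := hX s hs (by linarith)
  have hXs_s := hadapted s hs (by linarith)
  have := isFiniteMeasure_forwardMeasure (x := x) haffine_psi hTk0 hTkT
  -- Express all exponents through `ψ (T - Tk) uk`, the vector in the density of `Q'`.
  obtain ⟨hφt, hψt⟩ := hsemiflow.phi_psi_sub_of_le (by linarith) htTk hTkT
  obtain ⟨hφs, hψs⟩ := hsemiflow.phi_psi_sub_of_le hs (by linarith : s ≤ Tk) hTkT
  have hφts := (hsemiflow.phi_psi_sub_of_le hs (hsr.trans hrt) (by linarith)).1
  rw [hψt] at haffine_w haffine_u hφts ⊢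
  have hJ := (haffine_u.integrable_exp_psi_dotProduct hs hsr (by linarith)).lintegral_lt_top
  have hjoint := fun A (hA : MeasurableSet[ℱ s] A) =>
    haffine_psi.setLIntegral_exp_add_mul_exp hadapted haffine_w haffine_u hs hsr hrt htTk hTkT hA
  refine condExp_ae_eq_of_forall_setLIntegral_eq (ℱ.le s) (by fun_prop)
    (ae_of_all _ fun _ => (exp_pos _).le) (by fun_prop) (ae_of_all _ fun _ => (exp_pos _).le)
    ?_ fun A hA => ?_
  · rw [← setLIntegral_univ, setLIntegral_forwardMeasure (hX Tk hTk0 hTkT) (by fun_prop)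
      MeasurableSet.univ, hjoint _ MeasurableSet.univ, setLIntegral_univ]
    finiteness
  · rw [setLIntegral_forwardMeasure (hX Tk hTk0 hTkT) (by fun_prop) (ℱ.le s _ hA),
      setLIntegral_forwardMeasure (hX Tk hTk0 hTkT) (by fun_prop) (ℱ.le s _ hA), hjoint A hA,
      haffine_psi.setLIntegral_exp_affine_mul_exp hXs_s hs (by linarith) hTkT hA, hψs,
      sub_add_cancel]
    congr 4
    linarith

/-- Under the forward measure `Q'`, for `0 ≤ s ≤ r ≤ t ≤ Tk` and vectors `u, w` such that `X`
has the affine property at `ψ (T - t) uk + w` and at `ψ (t - r) (ψ (T - t) uk + w) + u`, with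
`(φ, ψ)` satisfying the semiflow equations at `uk`, one has `Q'`-a.s.
`E_{Q'}[exp (u ⬝ᵥ X r + w ⬝ᵥ X t) | ℱ s]
  = exp (φ (t-r) (ψ (T-t) uk + w) + φ (r-s) (ψ (t-r) (ψ (T-t) uk + w) + u)
      - φ (t-s) (ψ (T-t) uk)
      + (ψ (r-s) (ψ (t-r) (ψ (T-t) uk + w) + u) - ψ (T-s) uk) ⬝ᵥ X s)`. -/
theorem forward_measure_joint_mgf
    {Ω : Type*} {m0 : MeasurableSpace Ω} {d : ℕ} (T : ℝ) (hT : 0 < T)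
    (ℱ : MeasureTheory.Filtration ℝ m0) (Q : Measure Ω) [IsProbabilityMeasure Q]
    (X : ℝ → Ω → (Fin d → ℝ)) (x : Fin d → ℝ)
    (hadapted : ∀ t : ℝ, 0 ≤ t → t ≤ T → Measurable[ℱ t] (X t))
    (hX0 : ∀ ω, X 0 ω = x)
    (φ : ℝ → (Fin d → ℝ) → ℝ) (ψ : ℝ → (Fin d → ℝ) → (Fin d → ℝ))
    (Tk : ℝ) (hTk0 : 0 ≤ Tk) (hTkT : Tk ≤ T) (uk : Fin d → ℝ)
    (haffine_uk : AffineProperty T ℱ Q X φ ψ uk)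
    (haffine_psi : AffineProperty T ℱ Q X φ ψ (ψ (T - Tk) uk))
    (s r t : ℝ) (hs : 0 ≤ s) (hsr : s ≤ r) (hrt : r ≤ t) (htTk : t ≤ Tk)
    (u w : Fin d → ℝ)
    (haffine_w : AffineProperty T ℱ Q X φ ψ (ψ (T - t) uk + w))
    (haffine_u : AffineProperty T ℱ Q X φ ψ (ψ (t - r) (ψ (T - t) uk + w) + u))
    (hsemiflow : Semiflow T φ ψ uk) :
    (forwardMeasure T Q X x φ ψ Tk uk)[fun ω => exp (u ⬝ᵥ X r ω + w ⬝ᵥ X t ω)|ℱ s]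
      =ᵐ[forwardMeasure T Q X x φ ψ Tk uk]
    fun ω => exp (φ (t - r) (ψ (T - t) uk + w)
      + φ (r - s) (ψ (t - r) (ψ (T - t) uk + w) + u)
      - φ (t - s) (ψ (T - t) uk)
      + (ψ (r - s) (ψ (t - r) (ψ (T - t) uk + w) + u) - ψ (T - s) uk) ⬝ᵥ X s ω) :=
  forward_measure_joint_mgf_general T ℱ Q X x hadapted φ ψ Tk hTk0 hTkT uk haffine_psi s r t hs hsr
    hrt htTk u w haffine_w haffine_u hsemiflow
end

section
/- Let X = (X_t)_{0≤t≤T} and Y = (Y_t)_{0≤t≤T} be stochastic processes on a common probability space with values in ℝ^{d₁} and ℝ^{d₂} respectively, such that the σ-algebras σ(X_s : s ≤ T) and σ(Y_s : s ≤ T) are independent. Let (ℱ^X_t) and (ℱ^Y_t) be the natural filtrations of X and Y, and suppose that for some functions φ^X, ψ^X, φ^Y, ψ^Y and vectors u ∈ ℝ^{d₁}, w ∈ ℝ^{d₂}: for all 0 ≤ s ≤ t ≤ T, exp(u·X_t) and exp(w·Y_t) are integrable, E[exp(u·X_t) | ℱ^X_s] = exp(φ^X_{t−s}(u) + ψ^X_{t−s}(u)·X_s)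 a.s. and E[exp(w·Y_t) | ℱ^Y_s] = exp(φ^Y_{t−s}(w) + ψ^Y_{t−s}(w)·Y_s) a.s. Then, with respect to the filtration ℱ_t := ℱ^X_t ∨ ℱ^Y_t, for all 0 ≤ s ≤ t ≤ T: E[exp(u·X_t + w·Y_t) | ℱ_s] = exp( φ^X_{t−s}(u) + φ^Y_{t−s}(w) + ψ^X_{t−s}(u)·X_s + ψ^Y_{t−s}(w)·Y_s ) almost surely. In particular, the joint process (X, Y) has the affine property with φ = φ^X + φ^Y and ψ = (ψ^X, ψ^Y). -/
open MeasureTheory Real Matrix ProbabilityTheory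

/-! Write `exp (u ⬝ᵥ X t + w ⬝ᵥ Y t) = F * G` with `F` measurable for `σ(X)` and `G` for `σ(Y)`.
For `A ∈ ℱ^X_s` and `B ∈ ℱ^Y_s`, independence factorises `∫_{A ∩ B} F G` into
`(∫_A F) (∫_B G) = (∫_A E[F | ℱ^X_s]) (∫_B E[G | ℱ^Y_s])`, and the product of the two
conditional expectations factorises in the same way. The rectangles `A ∩ B` form a π-system
generating `ℱ^X_s ⊔ ℱ^Y_s`, so `E[F G | ℱ^X_s ⊔ ℱ^Y_s] = E[F | ℱ^X_s] E[G | ℱ^Y_s]`, and the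
two affine formulas multiply. -/

/-- The natural σ-algebra at time `t` generated by a process `Z`: `σ(Z s : s ≤ t)`. -/
def naturalSigma {Ω E : Type*} [MeasurableSpace E] (Z : ℝ → Ω → E) (t : ℝ) :
    MeasurableSpace Ω :=
  ⨆ s ∈ Set.Iic t, MeasurableSpace.comap (Z s) inferInstance

theorem setIntegral_eq_of_isPiSystem {α E : Type*} [NormedAddCommGroup E] [NormedSpace ℝ E]
    {m m₀ : MeasurableSpace α} {μ : Measure α} {s : Set (Set α)} {f g : α → E}
    (hm : m ≤ m₀) (h_eq : m = MeasurableSpace.generateFrom s) (h_inter : IsPiSystem s)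
    (h_univ : Set.univ ∈ s) (hf : Integrable f μ) (hg : Integrable g μ)
    (basic : ∀ t ∈ s, ∫ x in t, f x ∂μ = ∫ x in t, g x ∂μ) {t : Set α}
    (ht : MeasurableSet[m] t) : ∫ x in t, f x ∂μ = ∫ x in t, g x ∂μ := by
  induction t, ht using MeasurableSpace.induction_on_inter h_eq h_inter with
  | empty => simp
  | basic t ht => exact basic t ht
  | compl t ht iht =>
    have hf_add := integral_add_compl (hm t ht) hf
    have hg_add := integral_add_compl (hm t ht) hg
    have h_total := basic _ h_univ
    rw [setIntegral_univ, setIntegral_univ] at h_total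
    rw [h_total, iht] at hf_add
    exact add_left_cancel (hf_add.trans hg_add.symm)
  | iUnion t hdisj ht iht =>
    rw [integral_iUnion (fun i => hm _ (ht i)) hdisj hf.integrableOn,
      integral_iUnion (fun i => hm _ (ht i)) hdisj hg.integrableOn]
    exact tsum_congr iht

namespace MeasurableSpace

variable {Ω : Type*} {m₁ m₂ : MeasurableSpace Ω}

theorem isPiSystem_image2_inter :
    IsPiSystem (Set.image2 (· ∩ ·) {s | MeasurableSet[m₁] s} {s | MeasurableSet[m₂] s}) := by
  rintro _ ⟨A₁, hA₁, B₁, hB₁, rfl⟩ _ ⟨A₂, hA₂, B₂, hB₂, rfl⟩ _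
  exact ⟨A₁ ∩ A₂, hA₁.inter hA₂, B₁ ∩ B₂, hB₁.inter hB₂, Set.inter_inter_inter_comm A₁ A₂ B₁ B₂⟩

theorem generateFrom_image2_inter :
    generateFrom (Set.image2 (· ∩ ·) {s | MeasurableSet[m₁] s} {s | MeasurableSet[m₂] s})
      = m₁ ⊔ m₂ := by
  refine le_antisymm (generateFrom_le ?_) (sup_le (fun A hA => ?_) (fun B hB => ?_))
  · rintro _ ⟨A, hA, B, hB, rfl⟩
    exact (le_sup_left (b := m₂) A hA).inter (le_sup_right (a := m₁) B hB)
  · exact measurableSet_generateFrom ⟨A, hA, Set.univ, .univ, Set.inter_univ A⟩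
  · exact measurableSet_generateFrom ⟨Set.univ, .univ, B, hB, Set.univ_inter B⟩

end MeasurableSpace

namespace ProbabilityTheory

variable {Ω : Type*} {m₁ m₂ m₀ : MeasurableSpace Ω} {μ : Measure Ω}

theorem Indep.indepFun_of_measurable {β γ : Type*} [MeasurableSpace β] [MeasurableSpace γ]
    (h : Indep m₁ m₂ μ) {p : Ω → β} {q : Ω → γ} (hp : Measurable[m₁] p) (hq : Measurable[m₂] q) :
    IndepFun p q μ :=
  (IndepFun_iff_Indep p q μ).2
    (indep_of_indep_of_le_left (indep_of_indep_of_le_right h hq.comap_le) hp.comap_le)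

theorem Indep.setIntegral_inter_mul (hm₁ : m₁ ≤ m₀) (hm₂ : m₂ ≤ m₀) (h : Indep m₁ m₂ μ)
    {p q : Ω → ℝ} (hp : StronglyMeasurable[m₁] p) (hq : StronglyMeasurable[m₂] q)
    {A B : Set Ω} (hA : MeasurableSet[m₁] A) (hB : MeasurableSet[m₂] B) :
    ∫ ω in A ∩ B, p ω * q ω ∂μ = (∫ ω in A, p ω ∂μ) * ∫ ω in B, q ω ∂μ := by
  have hpA : StronglyMeasurable[m₁] (A.indicator p) := hp.indicator hA
  have hqB : StronglyMeasurable[m₂] (B.indicator q) := hq.indicator hB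
  rw [← integral_indicator ((hm₁ A hA).inter (hm₂ B hB)), ← integral_indicator (hm₁ A hA),
    ← integral_indicator (hm₂ B hB), ← (h.indepFun_of_measurable hpA.measurable
      hqB.measurable).integral_fun_mul_eq_mul_integral (hpA.mono hm₁).aestronglyMeasurable
      (hqB.mono hm₂).aestronglyMeasurable]
  exact integral_congr_ae (.of_eq (funext (Set.inter_indicator_mul p q)))

theorem condExp_mul_of_indep [IsFiniteMeasure μ] {mA mB : MeasurableSpace Ω}
    (hA₁ : mA ≤ m₁) (hB₂ : mB ≤ m₂) (hm₁ : m₁ ≤ m₀) (hm₂ : m₂ ≤ m₀) (h : Indep m₁ m₂ μ)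
    {F G : Ω → ℝ} (hF : StronglyMeasurable[m₁] F) (hG : StronglyMeasurable[m₂] G)
    (hFi : Integrable F μ) (hGi : Integrable G μ) :
    μ[fun ω => F ω * G ω | mA ⊔ mB] =ᵐ[μ] μ[F|mA] * μ[G|mB] := by
  have hmA : mA ≤ m₀ := hA₁.trans hm₁
  have hmB : mB ≤ m₀ := hB₂.trans hm₂
  have hf : StronglyMeasurable[m₁] μ[F|mA] := stronglyMeasurable_condExp.mono hA₁
  have hg : StronglyMeasurable[m₂] μ[G|mB] := stronglyMeasurable_condExp.mono hB₂
  have hFG : Integrable (fun ω => F ω * G ω) μ :=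
    (h.indepFun_of_measurable hF.measurable hG.measurable).integrable_mul hFi hGi
  have hfg : Integrable (μ[F|mA] * μ[G|mB]) μ :=
    (h.indepFun_of_measurable hf.measurable hg.measurable).integrable_mul
      integrable_condExp integrable_condExp
  have on_rectangles :
      ∀ t ∈ Set.image2 (· ∩ ·) {s | MeasurableSet[mA] s} {s | MeasurableSet[mB] s},
      ∫ ω in t, (μ[F|mA] * μ[G|mB]) ω ∂μ = ∫ ω in t, F ω * G ω ∂μ := by
    rintro _ ⟨A, hA, B, hB, rfl⟩
    rw [Pi.mul_def, h.setIntegral_inter_mul hm₁ hm₂ hf hg (hA₁ A hA) (hB₂ B hB),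
      h.setIntegral_inter_mul hm₁ hm₂ hF hG (hA₁ A hA) (hB₂ B hB),
      setIntegral_condExp hmA hFi hA, setIntegral_condExp hmB hGi hB]
  refine (ae_eq_condExp_of_forall_setIntegral_eq (sup_le hmA hmB) hFG
    (fun _ _ _ => hfg.integrableOn) (fun t ht _ => ?_) ?_).symm
  · exact setIntegral_eq_of_isPiSystem (sup_le hmA hmB)
      MeasurableSpace.generateFrom_image2_inter.symm MeasurableSpace.isPiSystem_image2_inter
      ⟨_, .univ, _, .univ, Set.inter_self _⟩ hfg hFG on_rectangles ht
  · exact ((stronglyMeasurable_condExp.mono le_sup_left).mul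
      (stronglyMeasurable_condExp.mono le_sup_right)).aestronglyMeasurable

end ProbabilityTheory

section naturalSigma

variable {Ω E : Type*} [MeasurableSpace E] {Z : ℝ → Ω → E}

theorem naturalSigma_mono {s t : ℝ} (hst : s ≤ t) : naturalSigma Z s ≤ naturalSigma Z t :=
  biSup_mono fun _ hr => Set.mem_Iic.2 (le_trans hr hst)

theorem naturalSigma_le {m₀ : MeasurableSpace Ω} (hZ : ∀ s, Measurable (Z s)) (t : ℝ) :
    naturalSigma Z t ≤ m₀ :=
  iSup₂_le fun s _ => (hZ s).comap_le

theorem measurable_naturalSigma {s t : ℝ} (hst : s ≤ t) : Measurable[naturalSigma Z t] (Z s) :=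
  measurable_iff_comap_le.2 (le_iSup₂ (f := fun r (_ : r ∈ Set.Iic t) =>
    MeasurableSpace.comap (Z r) inferInstance) s hst)

end naturalSigma

theorem joint_affine_of_indep_general
    {Ω : Type*} {m0 : MeasurableSpace Ω} (μ : Measure Ω) [IsProbabilityMeasure μ]
    {d₁ d₂ : ℕ} (T : ℝ)
    (X : ℝ → Ω → (Fin d₁ → ℝ)) (Y : ℝ → Ω → (Fin d₂ → ℝ))
    (hXmeas : ∀ s : ℝ, Measurable (X s)) (hYmeas : ∀ s : ℝ, Measurable (Y s))
    (hindep : Indep (naturalSigma X T) (naturalSigma Y T) μ)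
    (φX : ℝ → (Fin d₁ → ℝ) → ℝ) (ψX : ℝ → (Fin d₁ → ℝ) → (Fin d₁ → ℝ))
    (φY : ℝ → (Fin d₂ → ℝ) → ℝ) (ψY : ℝ → (Fin d₂ → ℝ) → (Fin d₂ → ℝ))
    (u : Fin d₁ → ℝ) (w : Fin d₂ → ℝ)
    (hXaff : ∀ s t : ℝ, 0 ≤ s → s ≤ t → t ≤ T →
      Integrable (fun ω => exp (u ⬝ᵥ X t ω)) μ ∧
      μ[fun ω => exp (u ⬝ᵥ X t ω)|naturalSigma X s] =ᵐ[μ]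
        fun ω => exp (φX (t - s) u + ψX (t - s) u ⬝ᵥ X s ω))
    (hYaff : ∀ s t : ℝ, 0 ≤ s → s ≤ t → t ≤ T →
      Integrable (fun ω => exp (w ⬝ᵥ Y t ω)) μ ∧
      μ[fun ω => exp (w ⬝ᵥ Y t ω)|naturalSigma Y s] =ᵐ[μ]
        fun ω => exp (φY (t - s) w + ψY (t - s) w ⬝ᵥ Y s ω)) :
    ∀ s t : ℝ, 0 ≤ s → s ≤ t → t ≤ T →
      Integrable (fun ω => exp (u ⬝ᵥ X t ω + w ⬝ᵥ Y t ω)) μ ∧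
      μ[fun ω => exp (u ⬝ᵥ X t ω + w ⬝ᵥ Y t ω)|naturalSigma X s ⊔ naturalSigma Y s]
        =ᵐ[μ] fun ω => exp (φX (t - s) u + φY (t - s) w
          + ψX (t - s) u ⬝ᵥ X s ω + ψY (t - s) w ⬝ᵥ Y s ω) := by
  intro s t hs hst htT
  obtain ⟨hFi, hF_cond⟩ := hXaff s t hs hst htT
  obtain ⟨hGi, hG_cond⟩ := hYaff s t hs hst htT
  have hF : StronglyMeasurable[naturalSigma X T] fun ω => exp (u ⬝ᵥ X t ω) :=
    ((by fun_prop : Measurable fun v => exp (u ⬝ᵥ v)).comp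
      (measurable_naturalSigma htT)).stronglyMeasurable
  have hG : StronglyMeasurable[naturalSigma Y T] fun ω => exp (w ⬝ᵥ Y t ω) :=
    ((by fun_prop : Measurable fun v => exp (w ⬝ᵥ v)).comp
      (measurable_naturalSigma htT)).stronglyMeasurable
  have h_exp_add : (fun ω => exp (u ⬝ᵥ X t ω + w ⬝ᵥ Y t ω))
      = fun ω => exp (u ⬝ᵥ X t ω) * exp (w ⬝ᵥ Y t ω) := funext fun _ => exp_add _ _
  rw [h_exp_add]
  refine ⟨(hindep.indepFun_of_measurable hF.measurable hG.measurable).integrable_mul hFi hGi, ?_⟩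
  refine (condExp_mul_of_indep (naturalSigma_mono (hst.trans htT))
    (naturalSigma_mono (hst.trans htT)) (naturalSigma_le hXmeas T) (naturalSigma_le hYmeas T)
    hindep hF hG hFi hGi).trans ((hF_cond.mul hG_cond).trans (.of_eq (funext fun ω => ?_)))
  simp only [Pi.mul_apply, ← exp_add]
  congr 1
  ring

/-- If `X` and `Y` are independent processes (i.e. `σ(X s : s ≤ T)` and `σ(Y s : s ≤ T)` are
independent), each having the affine property with respect to its own natural filtration with
exponents `(φX, ψX)` at `u` and `(φY, ψY)` at `w`, then with respect to the filtration
`ℱ t := ℱ^X t ⊔ ℱ^Y t` one has, for all `0 ≤ s ≤ t ≤ T`, integrability and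
`E[exp (u ⬝ᵥ X t + w ⬝ᵥ Y t) | ℱ s]
  = exp (φX (t-s) u + φY (t-s) w + ψX (t-s) u ⬝ᵥ X s + ψY (t-s) w ⬝ᵥ Y s)` a.s.;
i.e. the joint process `(X, Y)` has the affine property at `(u, w)` with
`φ = φX + φY` and `ψ = (ψX, ψY)`. -/
theorem joint_affine_of_indep
    {Ω : Type*} {m0 : MeasurableSpace Ω} (μ : Measure Ω) [IsProbabilityMeasure μ]
    {d₁ d₂ : ℕ} (T : ℝ) (hT : 0 < T)
    (X : ℝ → Ω → (Fin d₁ → ℝ)) (Y : ℝ → Ω → (Fin d₂ → ℝ))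
    (hXmeas : ∀ s : ℝ, Measurable (X s)) (hYmeas : ∀ s : ℝ, Measurable (Y s))
    (hindep : Indep (naturalSigma X T) (naturalSigma Y T) μ)
    (φX : ℝ → (Fin d₁ → ℝ) → ℝ) (ψX : ℝ → (Fin d₁ → ℝ) → (Fin d₁ → ℝ))
    (φY : ℝ → (Fin d₂ → ℝ) → ℝ) (ψY : ℝ → (Fin d₂ → ℝ) → (Fin d₂ → ℝ))
    (u : Fin d₁ → ℝ) (w : Fin d₂ → ℝ)
    (hXaff : ∀ s t : ℝ, 0 ≤ s → s ≤ t → t ≤ T →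
      Integrable (fun ω => exp (u ⬝ᵥ X t ω)) μ ∧
      μ[fun ω => exp (u ⬝ᵥ X t ω)|naturalSigma X s] =ᵐ[μ]
        fun ω => exp (φX (t - s) u + ψX (t - s) u ⬝ᵥ X s ω))
    (hYaff : ∀ s t : ℝ, 0 ≤ s → s ≤ t → t ≤ T →
      Integrable (fun ω => exp (w ⬝ᵥ Y t ω)) μ ∧
      μ[fun ω => exp (w ⬝ᵥ Y t ω)|naturalSigma Y s] =ᵐ[μ]
        fun ω => exp (φY (t - s) w + ψY (t - s) w ⬝ᵥ Y s ω)) :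
    ∀ s t : ℝ, 0 ≤ s → s ≤ t → t ≤ T →
      Integrable (fun ω => exp (u ⬝ᵥ X t ω + w ⬝ᵥ Y t ω)) μ ∧
      μ[fun ω => exp (u ⬝ᵥ X t ω + w ⬝ᵥ Y t ω)|naturalSigma X s ⊔ naturalSigma Y s]
        =ᵐ[μ] fun ω => exp (φX (t - s) u + φY (t - s) w
          + ψX (t - s) u ⬝ᵥ X s ω + ψY (t - s) w ⬝ᵥ Y s ω) :=
  joint_affine_of_indep_general (m0 := m0) μ T X Y hXmeas hYmeas hindep φX ψX φY ψY u w hXaff hYaff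
end

section
/- Let X_T be a random vector in ℝ^{m+n} (m ≥ 1, n ≥ 0) whose first m coordinates are almost surely nonnegative, let ℱ_t be a sub-σ-algebra, and let u, u' ∈ ℝ^{m+n} be vectors with u'_i ≥ u_i ≥ 0 for 1 ≤ i ≤ m and u'_i = u_i = 0 for i > m. If exp(u'·X_T) is integrable, then exp(u·X_T) is integrable and E[exp(u'·X_T) | ℱ_t] ≥ E[exp(u·X_T) | ℱ_t] almost surely. Consequently, in the affine market model where the normalized bond prices are M_t^{u'} = E[exp(u'·X_T) | ℱ_t] and M_t^{u} = E[exp(u·X_T) | ℱ_t], the forward interest rate F(t) := (M_t^{u'} / M_t^{u} − 1)/Δ is almost surely nonnegative for any Δ > 0. -/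
open MeasureTheory Real Matrix

/-- Let `XT` be a random vector in `ℝ^{m+n}` whose first `m` coordinates are a.s. nonnegative
and let `u, u'` satisfy `u' i ≥ u i ≥ 0` on the first `m` coordinates and `u' i = u i = 0`
elsewhere.  If `exp (u' ⬝ᵥ XT)` is integrable, then so is `exp (u ⬝ᵥ XT)`, the conditional
expectations satisfy `E[exp (u' ⬝ᵥ XT) | ℱt] ≥ E[exp (u ⬝ᵥ XT) | ℱt]` a.s., and consequently
the forward interest rate `F := (M^{u'} / M^{u} - 1) / Δ` is a.s. nonnegative
for any `Δ > 0`. -/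
theorem forward_rate_nonneg
    {Ω : Type*} {m0 : MeasurableSpace Ω} (μ : Measure Ω) [IsProbabilityMeasure μ]
    (m n : ℕ) (hm : 1 ≤ m) (XT : Ω → Fin (m + n) → ℝ) (hXTmeas : Measurable XT)
    (hXTpos : ∀ᵐ ω ∂μ, ∀ i : Fin (m + n), (i : ℕ) < m → 0 ≤ XT ω i)
    (ℱt : MeasurableSpace Ω) (hℱt : ℱt ≤ m0)
    (u u' : Fin (m + n) → ℝ)
    (hu : ∀ i : Fin (m + n), (i : ℕ) < m → 0 ≤ u i ∧ u i ≤ u' i)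
    (hu0 : ∀ i : Fin (m + n), m ≤ (i : ℕ) → u i = 0 ∧ u' i = 0)
    (hint' : Integrable (fun ω => exp (u' ⬝ᵥ XT ω)) μ)
    (Δ : ℝ) (hΔ : 0 < Δ) :
    Integrable (fun ω => exp (u ⬝ᵥ XT ω)) μ ∧
    (∀ᵐ ω ∂μ, (μ[fun ω => exp (u ⬝ᵥ XT ω)|ℱt]) ω ≤ (μ[fun ω => exp (u' ⬝ᵥ XT ω)|ℱt]) ω) ∧
    (∀ᵐ ω ∂μ, 0 ≤ ((μ[fun ω => exp (u' ⬝ᵥ XT ω)|ℱt]) ω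
      / (μ[fun ω => exp (u ⬝ᵥ XT ω)|ℱt]) ω - 1) / Δ) := by
  -- pointwise facts
  have hdot : ∀ᵐ ω ∂μ, 0 ≤ u ⬝ᵥ XT ω ∧ u ⬝ᵥ XT ω ≤ u' ⬝ᵥ XT ω := by
    filter_upwards [hXTpos] with ω hω
    constructor
    · apply Finset.sum_nonneg
      intro i _
      by_cases hi : (i : ℕ) < m
      · exact mul_nonneg (hu i hi).1 (hω i hi)
      · simp [(hu0 i (le_of_not_gt hi)).1]
    · apply Finset.sum_le_sum
      intro i _
      by_cases hi : (i : ℕ) < m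
      · exact mul_le_mul_of_nonneg_right (hu i hi).2 (hω i hi)
      · simp [(hu0 i (le_of_not_gt hi)).1, (hu0 i (le_of_not_gt hi)).2]
  have hle : ∀ᵐ ω ∂μ, exp (u ⬝ᵥ XT ω) ≤ exp (u' ⬝ᵥ XT ω) := by
    filter_upwards [hdot] with ω hω using exp_le_exp.2 hω.2
  have hone : ∀ᵐ ω ∂μ, (1 : ℝ) ≤ exp (u ⬝ᵥ XT ω) := by
    filter_upwards [hdot] with ω hω using one_le_exp hω.1
  have hmeas : Measurable[m0] fun ω => exp (u ⬝ᵥ XT ω) := by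
    apply Measurable.exp
    apply Finset.measurable_sum
    intro i _
    exact ((measurable_pi_apply i).comp hXTmeas).const_mul (u i)
  have hint : Integrable (fun ω => exp (u ⬝ᵥ XT ω)) μ := by
    refine hint'.mono hmeas.aestronglyMeasurable ?_
    filter_upwards [hle] with ω hω
    rw [norm_of_nonneg (exp_pos _).le, norm_of_nonneg (exp_pos _).le]
    exact hω
  have hcmono := condExp_mono (m := ℱt) hint hint' hle
  have hone' : ∀ᵐ ω ∂μ, (1 : ℝ) ≤ (μ[fun ω => exp (u ⬝ᵥ XT ω)|ℱt]) ω := by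
    have := condExp_mono (m := ℱt) (integrable_const (1 : ℝ)) hint hone
    filter_upwards [this] with ω hω
    rwa [condExp_const hℱt] at hω
  refine ⟨hint, hcmono, ?_⟩
  filter_upwards [hcmono, hone'] with ω h1 h2
  have hpos : (0 : ℝ) < (μ[fun ω => exp (u ⬝ᵥ XT ω)|ℱt]) ω := lt_of_lt_of_le one_pos h2
  have : (1 : ℝ) ≤ (μ[fun ω => exp (u' ⬝ᵥ XT ω)|ℱt]) ω / (μ[fun ω => exp (u ⬝ᵥ XT ω)|ℱt]) ω :=
    (one_le_div hpos).2 h1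
  exact div_nonneg (by linarith) hΔ.le
end

section
/- Let λ > 0, σ ≥ 0, θ ∈ ℝ, α⁺, α⁻ > 0, β⁺, β⁻ ≥ 0, and let u ∈ ℝ with −α⁻ < u < α⁺. For t ≥ 0 define ψ_t(u) := e^{−λt} u and φ_t(u) := (σ²u²/(4λ))(1 − e^{−2λt}) + θ u (1 − e^{−λt}) + ((β⁺+β⁻)/2) log( ((α⁺ − e^{−λt}u)(α⁻ + e^{−λt}u)) / ((α⁺ − u)(α⁻ + u)) ) + ((β⁺−β⁻)/2) log( ((α⁺ − e^{−λt}u)(α⁻ + u)) / ((α⁺ − u)(α⁻ + e^{−λt}u)) ). Then for every t ≥ 0 one has −α⁻ < ψ_t(u) < α⁺, φ_0(u) = 0, ψ_0(u) = u, and the functions are differentiable in t with (d/dt) ψ_t(u) = −λ ψ_t(u) and (d/dt) φ_t(u) = (σ²/2) ψ_t(u)² + λθ ψ_t(u) + λβ⁺ ψ_t(u)/(α⁺ − ψ_t(u)) − λβ⁻ ψ_t(u)/(α⁻ + ψ_t(u)). -/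
/-!
Both exponents are driven by `ψ_t = e^{-λt} u`, which solves `ψ' = -λψ` and, as a convex
combination of `u` and `0`, stays in `(-α⁻, α⁺)`. After splitting its logarithms, `φ_t` is
`G(ψ_t) - G(u)` for the potential
`G(v) = -σ²v²/(4λ) - θv + β⁺ log(α⁺ - v) + β⁻ log(α⁻ + v)`, whose derivative satisfies
`G'(v) · (-λv) = F(v)`. The chain rule then gives `φ' = G'(ψ) ψ' = F(ψ)`.
-/

open Real Set Filter Topology

theorem exp_neg_mul_mem_Icc {lam t : ℝ} (hlam : 0 ≤ lam) (ht : 0 ≤ t) :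
    exp (-lam * t) ∈ Icc 0 1 :=
  ⟨(exp_pos _).le, exp_le_one_iff.2 (by nlinarith)⟩

theorem hasDerivAt_exp_neg_mul_mul (lam u t : ℝ) :
    HasDerivAt (fun t => exp (-lam * t) * u) (-lam * (exp (-lam * t) * u)) t := by
  have h := (((hasDerivAt_id' t).const_mul (-lam)).exp).mul_const u
  exact h.congr_deriv (by ring)

section Potential

variable (lam sigma theta alphaP alphaM betaP betaM : ℝ)

noncomputable def ouJumpPotential (v : ℝ) : ℝ :=
  -(sigma ^ 2 / (4 * lam)) * v ^ 2 - theta * v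
    + betaP * log (alphaP - v) + betaM * log (alphaM + v)

variable {alphaP alphaM} in
theorem hasDerivAt_ouJumpPotential {v : ℝ} (hP : alphaP - v ≠ 0) (hM : alphaM + v ≠ 0) :
    HasDerivAt (ouJumpPotential lam sigma theta alphaP alphaM betaP betaM)
      (-(sigma ^ 2 / (4 * lam)) * (2 * v) - theta
        - betaP / (alphaP - v) + betaM / (alphaM + v)) v := by
  have h := ((((hasDerivAt_pow 2 v).const_mul (-(sigma ^ 2 / (4 * lam)))).sub
    ((hasDerivAt_id' v).const_mul theta)).add
    ((((hasDerivAt_id' v).const_sub alphaP).log hP).const_mul betaP)).add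
    ((((hasDerivAt_id' v).const_add alphaM).log hM).const_mul betaM)
  exact h.congr_deriv (by ring)

variable {lam alphaP alphaM} in
theorem ouJumpPotential_deriv_mul_drift (hlam : lam ≠ 0) {v : ℝ}
    (hP : alphaP - v ≠ 0) (hM : alphaM + v ≠ 0) :
    (-(sigma ^ 2 / (4 * lam)) * (2 * v) - theta
        - betaP / (alphaP - v) + betaM / (alphaM + v)) * (-lam * v)
      = sigma ^ 2 / 2 * v ^ 2 + lam * theta * v
        + lam * betaP * v / (alphaP - v) - lam * betaM * v / (alphaM + v) := by
  field_simp
  ring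

variable {alphaP alphaM} in
theorem ouJump_exponent_eq_potential_sub {s u : ℝ}
    (hsP : 0 < alphaP - s * u) (hsM : 0 < alphaM + s * u)
    (huP : 0 < alphaP - u) (huM : 0 < alphaM + u) :
    (sigma ^ 2 * u ^ 2 / (4 * lam)) * (1 - s ^ 2) + theta * u * (1 - s)
      + ((betaP + betaM) / 2) *
        log (((alphaP - s * u) * (alphaM + s * u)) / ((alphaP - u) * (alphaM + u)))
      + ((betaP - betaM) / 2) *
        log (((alphaP - s * u) * (alphaM + u)) / ((alphaP - u) * (alphaM + s * u)))
      = ouJumpPotential lam sigma theta alphaP alphaM betaP betaM (s * u)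
        - ouJumpPotential lam sigma theta alphaP alphaM betaP betaM u := by
  rw [log_div (by positivity) (by positivity), log_div (by positivity) (by positivity),
    log_mul hsP.ne' hsM.ne', log_mul huP.ne' huM.ne', log_mul hsP.ne' huM.ne',
    log_mul huP.ne' hsM.ne', ouJumpPotential, ouJumpPotential]
  ring

end Potential

theorem ou_jump_riccati_general (lam sigma theta alphaP alphaM betaP betaM : ℝ)
    (hlam : 0 < lam) (halphaP : 0 < alphaP) (halphaM : 0 < alphaM)
    (u : ℝ) (huM : -alphaM < u) (huP : u < alphaP) (ψ φ : ℝ → ℝ)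
    (hψ : ∀ t, ψ t = exp (-lam * t) * u)
    (hφ : ∀ t, φ t = (sigma ^ 2 * u ^ 2 / (4 * lam)) * (1 - exp (-2 * lam * t))
      + theta * u * (1 - exp (-lam * t))
      + ((betaP + betaM) / 2) *
        log (((alphaP - exp (-lam * t) * u) * (alphaM + exp (-lam * t) * u))
          / ((alphaP - u) * (alphaM + u)))
      + ((betaP - betaM) / 2) *
        log (((alphaP - exp (-lam * t) * u) * (alphaM + u))
          / ((alphaP - u) * (alphaM + exp (-lam * t) * u)))) :
    (∀ t, 0 ≤ t → -alphaM < ψ t ∧ ψ t < alphaP) ∧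
    φ 0 = 0 ∧ ψ 0 = u ∧
    (∀ t, 0 ≤ t → HasDerivAt ψ (-lam * ψ t) t) ∧
    (∀ t, 0 ≤ t → HasDerivAt φ ((sigma ^ 2 / 2) * (ψ t) ^ 2 + lam * theta * ψ t
      + lam * betaP * ψ t / (alphaP - ψ t) - lam * betaM * ψ t / (alphaM + ψ t)) t) := by
  set G := ouJumpPotential lam sigma theta alphaP alphaM betaP betaM
  have hψ' : ∀ t, HasDerivAt ψ (-lam * ψ t) t := fun t => by
    simpa only [funext hψ, hψ t] using hasDerivAt_exp_neg_mul_mul lam u t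
  have hψIoo : ∀ t, 0 ≤ t → ψ t ∈ Ioo (-alphaM) alphaP := fun t ht => by
    simpa only [hψ t, smul_eq_mul] using convex_Ioo (-alphaM) alphaP |>.smul_mem_of_zero_mem
      ⟨neg_lt_zero.2 halphaM, halphaP⟩ ⟨huM, huP⟩ (exp_neg_mul_mem_Icc hlam.le ht)
  have hφG : ∀ t, ψ t ∈ Ioo (-alphaM) alphaP → φ t = G (ψ t) - G u := by
    rintro t ⟨hM, hP⟩
    rw [hψ t] at hM hP ⊢
    rw [hφ t, show -2 * lam * t = (2 : ℕ) * (-lam * t) by push_cast; ring, exp_nat_mul]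
    exact ouJump_exponent_eq_potential_sub lam sigma theta betaP betaM
      (by linarith) (by linarith) (by linarith) (by linarith)
  refine ⟨hψIoo, ?_, by simp [hψ], fun t _ => hψ' t, fun t ht => ?_⟩
  · rw [hφG 0 (hψIoo 0 le_rfl), hψ 0, mul_zero, exp_zero, one_mul, sub_self]
  obtain ⟨hM, hP⟩ := hψIoo t ht
  -- `φ = G ∘ ψ - G u` only where the logarithms split, but that is a neighbourhood of `t`.
  have hnear : φ =ᶠ[𝓝 t] fun s => G (ψ s) - G u :=
    eventually_of_mem ((hψ' t).continuousAt.preimage_mem_nhds (isOpen_Ioo.mem_nhds ⟨hM, hP⟩)) hφG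
  have hGψ := ((hasDerivAt_ouJumpPotential lam sigma theta betaP betaM
    (sub_ne_zero.2 hP.ne') (by linarith : alphaM + ψ t ≠ 0)).comp t (hψ' t)).sub_const (G u)
  rw [ouJumpPotential_deriv_mul_drift sigma theta betaP betaM hlam.ne' (sub_ne_zero.2 hP.ne')
    (by linarith)] at hGψ
  exact hGψ.congr_of_eventuallyEq hnear

/-- The exponent functions of the Ornstein–Uhlenbeck process with two-sided compound Poisson
jumps: with `ψ_t(u) = e^{-λt} u` and
`φ_t(u) = (σ²u²/(4λ))(1 - e^{-2λt}) + θ u (1 - e^{-λt})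
  + ((β⁺+β⁻)/2) log (((α⁺ - e^{-λt}u)(α⁻ + e^{-λt}u)) / ((α⁺ - u)(α⁻ + u)))
  + ((β⁺-β⁻)/2) log (((α⁺ - e^{-λt}u)(α⁻ + u)) / ((α⁺ - u)(α⁻ + e^{-λt}u)))`,
if `-α⁻ < u < α⁺` then for every `t ≥ 0` one has `-α⁻ < ψ_t(u) < α⁺`, `φ_0(u) = 0`,
`ψ_0(u) = u`, and the generalized Riccati equations hold:
`(d/dt) ψ_t(u) = -λ ψ_t(u)` and
`(d/dt) φ_t(u) = (σ²/2) ψ_t(u)² + λθ ψ_t(u) + λβ⁺ ψ_t(u)/(α⁺ - ψ_t(u))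
  - λβ⁻ ψ_t(u)/(α⁻ + ψ_t(u))`. -/
theorem ou_jump_riccati (lam sigma theta alphaP alphaM betaP betaM : ℝ)
    (hlam : 0 < lam) (hsigma : 0 ≤ sigma) (halphaP : 0 < alphaP) (halphaM : 0 < alphaM)
    (hbetaP : 0 ≤ betaP) (hbetaM : 0 ≤ betaM)
    (u : ℝ) (huM : -alphaM < u) (huP : u < alphaP) (ψ φ : ℝ → ℝ)
    (hψ : ∀ t, ψ t = exp (-lam * t) * u)
    (hφ : ∀ t, φ t = (sigma ^ 2 * u ^ 2 / (4 * lam)) * (1 - exp (-2 * lam * t))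
      + theta * u * (1 - exp (-lam * t))
      + ((betaP + betaM) / 2) *
        log (((alphaP - exp (-lam * t) * u) * (alphaM + exp (-lam * t) * u))
          / ((alphaP - u) * (alphaM + u)))
      + ((betaP - betaM) / 2) *
        log (((alphaP - exp (-lam * t) * u) * (alphaM + u))
          / ((alphaP - u) * (alphaM + exp (-lam * t) * u)))) :
    (∀ t, 0 ≤ t → -alphaM < ψ t ∧ ψ t < alphaP) ∧
    φ 0 = 0 ∧ ψ 0 = u ∧
    (∀ t, 0 ≤ t → HasDerivAt ψ (-lam * ψ t) t) ∧
    (∀ t, 0 ≤ t → HasDerivAt φ ((sigma ^ 2 / 2) * (ψ t) ^ 2 + lam * theta * ψ t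
      + lam * betaP * ψ t / (alphaP - ψ t) - lam * betaM * ψ t / (alphaM + ψ t)) t) :=
  ou_jump_riccati_general lam sigma theta alphaP alphaM betaP betaM hlam halphaP halphaM u huM huP ψ
    φ hψ hφ
end

section
/- Let Y be a real-valued random variable on a probability space, K > 0, and R ∈ (1, ∞) such that E[exp(R Y)] < ∞. Define the extended moment generating function M(z) := E[exp(z Y)] for complex z with Re(z) = R. Then E[(e^Y − K)_+] = (K/π) ∫_0^∞ Re( M(iu + R) · K^{−(iu+R)} / ((iu+R)(iu+R−1)) ) du, where (a)_+ = max(a, 0) and K^{−z} = exp(−z log K). -/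
/-!
For a fixed log-price `y`, the payoff `k ↦ (e^y - k)₊` as a function of the strike has Mellin
transform `e^{(s+1)y} / (s(s+1))` on `Re s > 0`. Mellin inversion on the line `Re s = R - 1`,
written in `z = s + 1 = iu + R`, gives
`(e^y - K)₊ = K/(2π) ∫_ℝ e^{zy} K^{-z} / (z(z-1)) du`.
The integrand at `-u` is the conjugate of the one at `u`, so the real part of the integral over
`ℝ` is twice the integral over `(0, ∞)`. Since `|e^{zY}| = e^{RY}` and `u ↦ 1/|z(z-1)|` is
integrable, Fubini lets us take the expectation inside, which turns `e^{zY}` into `M z`.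
-/

open MeasureTheory Real Complex Set Filter ComplexConjugate

theorem HasMellin.congr_Ioi {E : Type*} [NormedAddCommGroup E] [NormedSpace ℂ E]
    {f g : ℝ → E} {s : ℂ} {m : E} (hf : HasMellin f s m) (hfg : EqOn f g (Ioi 0)) :
    HasMellin g s m :=
  ⟨(integrableOn_congr_fun (fun t ht => by simp only [hfg ht]) measurableSet_Ioi).1 hf.1,
    (setIntegral_congr_fun measurableSet_Ioi fun t ht => by simp only [hfg ht]).symm.trans hf.2⟩

theorem hasMellin_max_one_sub {s : ℂ} (hs : 0 < s.re) :
    HasMellin (fun t : ℝ => ((max (1 - t) 0 : ℝ) : ℂ)) s (1 / (s * (s + 1))) := by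
  have hs0 : s ≠ 0 := fun h => by simp [h] at hs
  have hs1 : s + 1 ≠ 0 := fun h => by
    have := congrArg re h
    simp only [add_re, one_re, zero_re] at this
    linarith
  have h1 := hasMellin_one_Ioc hs
  have h2 := hasMellin_cpow_Ioc 1 (s := s) (by rw [one_re]; linarith)
  have h := hasMellin_sub h1.1 h2.1
  rw [h1.2, h2.2, div_sub_div _ _ hs0 hs1, one_mul, mul_one, add_sub_cancel_left] at h
  refine h.congr_Ioi fun t ht => ?_
  rcases le_or_gt t 1 with ht1 | ht1
  · simp [indicator_of_mem (mem_Ioc.2 ⟨ht, ht1⟩), max_eq_left (sub_nonneg.2 ht1)]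
  · simp [indicator_of_notMem (fun h : t ∈ Ioc 0 1 => (not_le.2 ht1) h.2),
      max_eq_right (sub_nonpos.2 ht1.le)]

theorem ofReal_exp_cpow (y : ℝ) (w : ℂ) : (rexp y : ℂ) ^ w = cexp (y * w) := by
  rw [cpow_def_of_ne_zero (by exact_mod_cast (exp_pos y).ne'), ← ofReal_log (exp_pos y).le,
    Real.log_exp]

theorem hasMellin_max_exp_sub (y : ℝ) {s : ℂ} (hs : 0 < s.re) :
    HasMellin (fun k : ℝ => ((max (rexp y - k) 0 : ℝ) : ℂ)) s
      (cexp ((s + 1) * y) / (s * (s + 1))) := by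
  have hpos := exp_pos (-y)
  have hf := hasMellin_max_one_sub hs
  have h := hasMellin_const_smul ((MellinConvergent.comp_mul_left hpos).2 hf.1) (rexp y)
  rw [mellin_comp_mul_left (fun t : ℝ => ((max (1 - t) 0 : ℝ) : ℂ)) s hpos, hf.2] at h
  convert h using 1
  · ext k
    rw [real_smul, ← ofReal_mul, mul_max_of_nonneg _ _ (exp_pos y).le, mul_sub, mul_one,
      ← mul_assoc, ← Real.exp_add, add_neg_cancel, Real.exp_zero, one_mul, mul_zero]
  · have hexp : cexp ((s + 1) * y) = cexp y * cexp (↑(-y) * -s) := by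
      rw [← Complex.exp_add]; push_cast; ring_nf
    rw [ofReal_exp_cpow, real_smul, smul_eq_mul, ofReal_exp, hexp]
    ring

theorem integral_Ioi_re_eq_half_of_conj {f : ℝ → ℂ} (hf : Integrable f)
    (hconj : ∀ u, f (-u) = conj (f u)) :
    ∫ u in Ioi 0, (f u).re = (∫ u, f u).re / 2 := by
  have hre : Integrable fun u => (f u).re := hf.re
  have hreflect : ∫ u in Iic 0, (f u).re = ∫ u in Ioi 0, (f u).re := by
    rw [← neg_zero, ← integral_comp_neg_Iic]
    simp only [hconj, conj_re, neg_zero]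
  have hre_comm : ∫ u, (f u).re = (∫ u, f u).re := integral_re hf
  rw [← hre_comm, ← intervalIntegral.integral_Iic_add_Ioi hre.integrableOn hre.integrableOn,
    hreflect]
  ring

theorem integrable_inv_sq_add_sq {c : ℝ} (hc : c ≠ 0) :
    Integrable fun x : ℝ => (c ^ 2 + x ^ 2)⁻¹ := by
  refine ((integrable_inv_one_add_sq.comp_div hc).const_mul (c ^ 2)⁻¹).congr
    (.of_forall fun x => ?_)
  field_simp

section VerticalLine

variable {R : ℝ}

theorem sq_add_sq_le_norm_mul_sub_one (hR : 1 ≤ R) (u : ℝ) :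
    (R - 1) ^ 2 + u ^ 2 ≤ ‖((u : ℂ) * I + R) * ((u : ℂ) * I + R - 1)‖ := by
  have h1 : ‖(u : ℂ) * I + R - 1‖ ^ 2 = (R - 1) ^ 2 + u ^ 2 := by
    rw [Complex.sq_norm, ← normSq_add_mul_I]; congr 1; push_cast; ring
  have h2 : ‖(u : ℂ) * I + R‖ ^ 2 = R ^ 2 + u ^ 2 := by
    rw [Complex.sq_norm, ← normSq_add_mul_I, add_comm]
  have h3 : ‖(u : ℂ) * I + R - 1‖ ≤ ‖(u : ℂ) * I + R‖ :=
    (pow_le_pow_iff_left₀ (norm_nonneg _) (norm_nonneg _) two_ne_zero).1 (by nlinarith)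
  rw [norm_mul, ← h1, sq]
  exact mul_le_mul_of_nonneg_right h3 (norm_nonneg _)

theorem integrable_inv_mul_sub_one_line (hR : 1 < R) :
    Integrable fun u : ℝ => (((u : ℂ) * I + R) * ((u : ℂ) * I + R - 1))⁻¹ := by
  refine (integrable_inv_sq_add_sq (sub_ne_zero.2 hR.ne')).mono' (by fun_prop)
    (.of_forall fun u => ?_)
  rw [norm_inv]
  exact inv_anti₀ (by nlinarith [sq_nonneg u]) (sq_add_sq_le_norm_mul_sub_one hR.le u)

theorem mellin_max_exp_sub_line (hR : 1 < R) (y u : ℝ) :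
    mellin (fun k : ℝ => ((max (rexp y - k) 0 : ℝ) : ℂ)) ((R - 1 : ℝ) + u * I)
      = cexp ((u * I + R) * y) / ((u * I + R - 1) * (u * I + R)) := by
  rw [(hasMellin_max_exp_sub y (s := (R - 1 : ℝ) + u * I) (by simpa using hR)).2]
  congr 2 <;> push_cast <;> ring

theorem verticalIntegrable_mellin_max_exp_sub (hR : 1 < R) (y : ℝ) :
    VerticalIntegrable (mellin fun k : ℝ => ((max (rexp y - k) 0 : ℝ) : ℂ)) (R - 1) := by
  unfold VerticalIntegrable
  simp_rw [mellin_max_exp_sub_line hR, div_eq_mul_inv, mul_comm (_ - 1 : ℂ)]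
  refine (integrable_inv_mul_sub_one_line hR).bdd_mul (c := rexp (R * y)) (by fun_prop)
    (.of_forall fun u => ?_)
  simp [norm_exp]

end VerticalLine

/-- The integrand of the pricing formula when `Y = y` is deterministic, i.e. `M z = e^{zy}`. -/
noncomputable def callKernel (K y : ℝ) (z : ℂ) : ℂ :=
  cexp (z * y) * (K : ℂ) ^ (-z) / (z * (z - 1))

section CallKernel

variable {K R : ℝ}

theorem callKernel_conj (hK : 0 < K) (y : ℝ) (z : ℂ) :
    callKernel K y (conj z) = conj (callKernel K y z) := by
  have hcpow : (K : ℂ) ^ (-conj z) = conj ((K : ℂ) ^ (-z)) := by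
    rw [← map_neg, cpow_conj _ _ (by rw [arg_ofReal_of_nonneg hK.le]; exact pi_ne_zero.symm),
      conj_ofReal]
  simp only [callKernel, map_div₀, map_mul, map_sub, map_one, ← exp_conj, conj_ofReal, hcpow]

theorem norm_callKernel (hK : 0 < K) (y u : ℝ) :
    ‖callKernel K y (u * I + R)‖ =
      rexp (R * y) * K ^ (-R) * ‖(((u : ℂ) * I + R) * ((u : ℂ) * I + R - 1))⁻¹‖ := by
  rw [callKernel, div_eq_mul_inv, norm_mul, norm_mul, norm_exp,
    norm_cpow_eq_rpow_re_of_pos hK]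
  simp

theorem measurable_callKernel_line (K R : ℝ) :
    Measurable fun p : ℝ × ℝ => callKernel K p.1 (p.2 * I + R) := by
  unfold callKernel
  fun_prop

theorem integrable_callKernel_line (hK : 0 < K) (hR : 1 < R) (y : ℝ) :
    Integrable fun u : ℝ => callKernel K y (u * I + R) :=
  ((integrable_inv_mul_sub_one_line hR).norm.const_mul (rexp (R * y) * K ^ (-R))).mono'
    ((measurable_callKernel_line K R).comp measurable_prodMk_left).aestronglyMeasurable
    (.of_forall fun u => (norm_callKernel hK y u).le)

theorem integral_callKernel_line (hK : 0 < K) (hR : 1 < R) (y : ℝ) :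
    ∫ u : ℝ, callKernel K y (u * I + R) = 2 * π / K * max (rexp y - K) 0 := by
  have hK0 : (K : ℂ) ≠ 0 := ofReal_ne_zero.2 hK.ne'
  have hinv := mellinInv_mellin_eq (R - 1) _ hK
    (hasMellin_max_exp_sub y (by simpa using hR)).1 (verticalIntegrable_mellin_max_exp_sub hR y)
    (by fun_prop)
  have hintegrand (u : ℝ) : (K : ℂ) ^ (-((R - 1 : ℝ) + u * I)) •
      mellin (fun k : ℝ => ((max (rexp y - k) 0 : ℝ) : ℂ)) ((R - 1 : ℝ) + u * I)
        = K * callKernel K y (u * I + R) := by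
    rw [mellin_max_exp_sub_line hR, smul_eq_mul, callKernel,
      show -(((R - 1 : ℝ) : ℂ) + u * I) = 1 + -(u * I + R) by push_cast; ring,
      cpow_add _ _ hK0, cpow_one]
    ring
  rw [mellinInv] at hinv
  simp_rw [hintegrand, integral_const_mul, real_smul] at hinv
  generalize (∫ u : ℝ, callKernel K y (u * I + R)) = J at hinv ⊢
  rw [← hinv]
  push_cast
  field_simp

theorem integral_Ioi_callKernel_line_re (hK : 0 < K) (hR : 1 < R) (y : ℝ) :
    ∫ u in Ioi (0 : ℝ), (callKernel K y (u * I + R)).re = π / K * max (rexp y - K) 0 := by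
  have hconj (u : ℝ) :
      callKernel K y ((-u : ℝ) * I + R) = conj (callKernel K y (u * I + R)) := by
    rw [← callKernel_conj hK]
    simp
  rw [integral_Ioi_re_eq_half_of_conj (integrable_callKernel_line hK hR y) hconj,
    integral_callKernel_line hK hR y]
  norm_cast
  ring

variable {Ω : Type*} {mΩ : MeasurableSpace Ω} {μ : Measure Ω} {Y : Ω → ℝ}

theorem integrable_callKernel_comp (hY : Measurable Y)
    (hint : Integrable (fun ω => rexp (R * Y ω)) μ) (hK : 0 < K) (u : ℝ) :
    Integrable (fun ω => callKernel K (Y ω) (u * I + R)) μ :=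
  (hint.mul_const _).mono'
    ((measurable_callKernel_line K R).comp (hY.prodMk measurable_const)).aestronglyMeasurable
    (.of_forall fun ω => ((norm_callKernel hK (Y ω) u).trans (mul_assoc _ _ _)).le)

theorem integrable_callKernel_re_prod (hY : Measurable Y)
    (hint : Integrable (fun ω => rexp (R * Y ω)) μ) (hK : 0 < K) (hR : 1 < R) :
    Integrable (fun p : Ω × ℝ => (callKernel K (Y p.1) (p.2 * I + R)).re)
      (μ.prod (volume.restrict (Ioi 0))) := by
  refine (hint.mul_prod
      ((integrable_inv_mul_sub_one_line hR).norm.const_mul (K ^ (-R))).restrict).mono'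
    ((measurable_callKernel_line K R).comp (hY.prodMap measurable_id)).re.aestronglyMeasurable
    (.of_forall fun p => (abs_re_le_norm _).trans (le_of_eq ?_))
  rw [norm_callKernel hK, mul_assoc]

end CallKernel

/-- Fourier inversion formula for call option prices: if `Y` is a real random variable,
`K > 0`, and `R > 1` is such that `E[exp (R * Y)] < ∞`, then with
`M z := E[exp (z * Y)]` (the extended moment generating function on the line `Re z = R`),
`E[(e^Y - K)₊] = (K/π) ∫_0^∞ Re (M (iu+R) * K^{-(iu+R)} / ((iu+R)(iu+R-1))) du`. -/
theorem fourier_call_price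
    {Ω : Type*} {mΩ : MeasurableSpace Ω} (μ : Measure Ω) [IsProbabilityMeasure μ]
    (Y : Ω → ℝ) (hY : Measurable Y) (K : ℝ) (hK : 0 < K)
    (R : ℝ) (hR : 1 < R)
    (hint : Integrable (fun ω => rexp (R * Y ω)) μ)
    (M : ℂ → ℂ)
    (hM : ∀ z : ℂ, z.re = R → M z = ∫ ω, Complex.exp (z * (Y ω : ℂ)) ∂μ) :
    ∫ ω, max (rexp (Y ω) - K) 0 ∂μ =
      (K / π) * ∫ u in Set.Ioi (0 : ℝ),
        (M (u * Complex.I + R) * (K : ℂ) ^ (-(u * Complex.I + R))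
          / ((u * Complex.I + R) * (u * Complex.I + R - 1))).re := by
  have hM_kernel (u : ℝ) :
      M (u * I + R) * (K : ℂ) ^ (-(u * I + R)) / ((u * I + R) * (u * I + R - 1))
        = ∫ ω, callKernel K (Y ω) (u * I + R) ∂μ := by
    rw [hM _ (by simp), ← integral_mul_const, ← integral_div]
    rfl
  calc ∫ ω, max (rexp (Y ω) - K) 0 ∂μ
      = ∫ ω, K / π * (∫ u in Ioi (0 : ℝ), (callKernel K (Y ω) (u * I + R)).re) ∂μ := by
        congr 1 with ω
        rw [integral_Ioi_callKernel_line_re hK hR]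
        field_simp
    _ = K / π * ∫ u in Ioi (0 : ℝ), ∫ ω, (callKernel K (Y ω) (u * I + R)).re ∂μ := by
        rw [integral_const_mul,
          integral_integral_swap (integrable_callKernel_re_prod hY hint hK hR)]
    _ = _ := by
        congr 1
        refine setIntegral_congr_fun measurableSet_Ioi fun u _ => ?_
        rw [hM_kernel]
        exact integral_re (integrable_callKernel_comp hY hint hK u)
end
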